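/- arXiv:1207.3674 — 5 statements merged into one kernel-verified Lean document; each statement's English description precedes it below -/
import Mathlib

section
/- Equivalence theorem for finite r-measures: let D ⊆ ℝ² and let μ be an r-measure on D with μ(R) < ∞ for every R ∈ Rect(D). Let D• denote the set of decorated points of ℝ² that belong to at least one rectangle of Rect(D). Then there exists a unique multiplicity function m : D• → {0,1,2,…} such that μ(R) = Σ_{(p*,q*) ∈ R} m(p*,q*) for every R ∈ Rect(D); moreover this m is locally finite. Conversely, for every locally finite multiplicity function m on D•, the formula ν(R) = Σ_{(p*,q*) ∈ R} m(p*,q*) defines a finite r-measure ν on D. -/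
attribute [local instance] Classical.propDecidable

structure PersMod (k : Type) [Field k] (T : Type) [Preorder T] where
  space : T → Type
  [addCommGroup : ∀ t, AddCommGroup (space t)]
  [module : ∀ t, Module k (space t)]
  map : ∀ s t : T, s ≤ t → space s →ₗ[k] space t
  map_id : ∀ t, map t t le_rfl = LinearMap.id
  map_comp : ∀ r s t (h1 : r ≤ s) (h2 : s ≤ t),
    (map s t h2).comp (map r s h1) = map r t (h1.trans h2)

attribute [instance] PersMod.addCommGroup PersMod.module

def PersIso {k : Type} [Field k] {T : Type} [Preorder T] (U V : PersMod k T) : Prop :=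
  ∃ e : ∀ t, U.space t ≃ₗ[k] V.space t,
    ∀ s t (h : s ≤ t),
      (e t).toLinearMap.comp (U.map s t h) = (V.map s t h).comp (e s).toLinearMap

def IsIntervalSet {T : Type} [Preorder T] (J : Set T) : Prop :=
  J.Nonempty ∧ ∀ ⦃r s t : T⦄, r ∈ J → t ∈ J → r ≤ s → s ≤ t → s ∈ J

noncomputable def intervalModule (k : Type) [Field k] (T : Type) [Preorder T]
    (J : Set T) (hJ : IsIntervalSet J) : PersMod k T where
  space t := PLift (t ∈ J) → k
  addCommGroup := fun _ => inferInstance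
  module := fun _ => inferInstance
  map s t _ :=
    { toFun := fun f _ => if hs : s ∈ J then f ⟨hs⟩ else 0
      map_add' := fun f g => by
        funext ht; by_cases hs : s ∈ J <;> simp [hs]
      map_smul' := fun c f => by
        funext ht; by_cases hs : s ∈ J <;> simp [hs] }
  map_id t := by
    refine LinearMap.ext fun f => funext fun ht => ?_
    show (if hs : t ∈ J then f ⟨hs⟩ else 0) = f ht
    rw [dif_pos ht.down]
  map_comp r s t h1 h2 := by
    refine LinearMap.ext fun f => funext fun ht => ?_
    show (if hs : s ∈ J then (if hr : r ∈ J then f ⟨hr⟩ else 0) else 0)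
        = (if hr : r ∈ J then f ⟨hr⟩ else 0)
    by_cases hr : r ∈ J
    · have hs : s ∈ J := hJ.2 hr ht.down h1 h2
      simp [hr, hs]
    · by_cases hs : s ∈ J <;> simp [hr, hs]

noncomputable def dsum {k : Type} [Field k] {T : Type} [Preorder T] {L : Type}
    (V : L → PersMod k T) : PersMod k T where
  space t := DFinsupp (fun ℓ => (V ℓ).space t)
  addCommGroup := fun _ => inferInstance
  module := fun _ => inferInstance
  map s t h := DFinsupp.mapRange.linearMap (fun ℓ => (V ℓ).map s t h)
  map_id t := by
    show DFinsupp.mapRange.linearMap (fun ℓ => (V ℓ).map t t le_rfl) = LinearMap.id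
    have : (fun ℓ => (V ℓ).map t t le_rfl)
        = fun ℓ => (LinearMap.id : (V ℓ).space t →ₗ[k] (V ℓ).space t) :=
      funext fun ℓ => (V ℓ).map_id t
    rw [this]
    exact DFinsupp.mapRange.linearMap_id
  map_comp r s t h1 h2 := by
    show (DFinsupp.mapRange.linearMap (fun ℓ => (V ℓ).map s t h2)).comp
        (DFinsupp.mapRange.linearMap (fun ℓ => (V ℓ).map r s h1))
      = DFinsupp.mapRange.linearMap (fun ℓ => (V ℓ).map r t (h1.trans h2))
    rw [← DFinsupp.mapRange.linearMap_comp]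
    congr 1
    funext ℓ
    exact (V ℓ).map_comp r s t h1 h2

open scoped ENNReal

section Dim

noncomputable def edim (k : Type) [Field k] (M : Type) [AddCommGroup M] [Module k M] : ℕ∞ :=
  Cardinal.toENat (Module.rank k M)

noncomputable def erank {k : Type} [Field k] {M N : Type} [AddCommGroup M] [Module k M]
    [AddCommGroup N] [Module k N] (f : M →ₗ[k] N) : ℕ∞ :=
  edim k (LinearMap.range f)

noncomputable def ecard (S : Type) : ℕ∞ := Cardinal.toENat (Cardinal.mk S)

end Dim

section Matchings

noncomputable def eDiff (x y : EReal) : ℝ≥0∞ :=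
  if x = y then 0
  else if x = ⊤ ∨ x = ⊥ ∨ y = ⊤ ∨ y = ⊥ then ⊤
  else ENNReal.ofReal |x.toReal - y.toReal|

noncomputable def dPt (α β : EReal × EReal) : ℝ≥0∞ :=
  max (eDiff α.1 β.1) (eDiff α.2 β.2)

noncomputable def diagDist (α : EReal × EReal) : ℝ≥0∞ :=
  if α.1 = ⊥ ∨ α.2 = ⊤ then ⊤ else ENNReal.ofReal ((α.2.toReal - α.1.toReal) / 2)

def IsMatching {α β : Type} (M : Set (α × β)) : Prop :=
  (∀ a b b', (a, b) ∈ M → (a, b') ∈ M → b = b') ∧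
  (∀ a a' b, (a, b) ∈ M → (a', b) ∈ M → a = a')

def IsDeltaMatching {α β : Type} (A : α → EReal × EReal) (B : β → EReal × EReal)
    (δ : ℝ≥0∞) : Prop :=
  ∃ M : Set (α × β), IsMatching M ∧
    (∀ p ∈ M, dPt (A p.1) (B p.2) ≤ δ) ∧
    (∀ a, (∀ b, (a, b) ∉ M) → diagDist (A a) ≤ δ) ∧
    (∀ b, (∀ a, (a, b) ∉ M) → diagDist (B b) ≤ δ)

noncomputable def dBottle {α β : Type} (A : α → EReal × EReal) (B : β → EReal × EReal) : ℝ≥0∞ :=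
  sInf {d : ℝ≥0∞ | ∃ δ : ℝ, 0 ≤ δ ∧ IsDeltaMatching A B (ENNReal.ofReal δ) ∧ d = ENNReal.ofReal δ}

end Matchings

section Measure

noncomputable def persIm {k : Type} [Field k] (V : PersMod k ℝ) (a : EReal) (c : ℝ) :
    Submodule k (V.space c) :=
  if h : ∃ a' : ℝ, a = (a' : EReal) ∧ a' ≤ c then
    LinearMap.range (V.map h.choose c h.choose_spec.2)
  else ⊥

noncomputable def persKer {k : Type} [Field k] (V : PersMod k ℝ) (c : ℝ) (d : EReal) :
    Submodule k (V.space c) :=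
  if h : ∃ d' : ℝ, d = (d' : EReal) ∧ c ≤ d' then
    LinearMap.ker (V.map c h.choose h.choose_spec.2)
  else ⊤

noncomputable def persMeasure {k : Type} [Field k] (V : PersMod k ℝ)
    (a : EReal) (b c : ℝ) (d : EReal) : ℕ∞ :=
  edim k
    (↥(persIm V (b : EReal) c ⊓ persKer V c d) ⧸
      Submodule.comap (persIm V (b : EReal) c ⊓ persKer V c d).subtype
        (persIm V a c ⊓ persKer V c d))

end Measure

section Interleaving

def Interleaved (k : Type) [Field k] (U V : PersMod k ℝ) (δ : ℝ) : Prop :=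
  ∃ (φ : ∀ t : ℝ, U.space t →ₗ[k] V.space (t + δ))
    (ψ : ∀ t : ℝ, V.space t →ₗ[k] U.space (t + δ)),
    (∀ s t (h : s ≤ t),
      (φ t).comp (U.map s t h) = (V.map (s + δ) (t + δ) (by linarith)).comp (φ s)) ∧
    (∀ s t (h : s ≤ t),
      (ψ t).comp (V.map s t h) = (U.map (s + δ) (t + δ) (by linarith)).comp (ψ s)) ∧
    (∀ t (h : t ≤ t + δ + δ), (ψ (t + δ)).comp (φ t) = U.map t (t + δ + δ) h) ∧
    (∀ t (h : t ≤ t + δ + δ), (φ (t + δ)).comp (ψ t) = V.map t (t + δ + δ) h)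

noncomputable def dInter (k : Type) [Field k] (U V : PersMod k ℝ) : ℝ≥0∞ :=
  sInf {d : ℝ≥0∞ | ∃ δ : ℝ, 0 ≤ δ ∧ Interleaved k U V δ ∧ d = ENNReal.ofReal δ}

def QTame (k : Type) [Field k] (V : PersMod k ℝ) : Prop :=
  ∀ s t : ℝ, ∀ h : s < t, erank (V.map s t h.le) ≠ ⊤

def LocFinitePM (k : Type) [Field k] (W : PersMod k ℝ) : Prop :=
  ∃ (L : Type) (J : L → Set ℝ) (hJ : ∀ ℓ, IsIntervalSet (J ℓ)),
    PersIso W (dsum fun ℓ => intervalModule k ℝ (J ℓ) (hJ ℓ)) ∧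
    ∀ S : Set ℝ, Bornology.IsBounded S → {ℓ : L | (J ℓ ∩ S).Nonempty}.Finite

noncomputable def zeroPers (k : Type) [Field k] : PersMod k ℝ where
  space _ := PUnit
  addCommGroup := fun _ => inferInstance
  module := fun _ => inferInstance
  map _ _ _ := 0
  map_id t := LinearMap.ext fun x => Subsingleton.elim _ _
  map_comp r s t h1 h2 := LinearMap.ext fun x => Subsingleton.elim _ _

noncomputable def smoothing {k : Type} [Field k] (V : PersMod k ℝ) (ε : ℝ) (hε : 0 < ε) :
    PersMod k ℝ where
  space t := LinearMap.range (V.map (t - ε) (t + ε) (by linarith))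
  addCommGroup := fun _ => inferInstance
  module := fun _ => inferInstance
  map s t h := LinearMap.restrict (V.map (s + ε) (t + ε) (by linarith))
    (p := LinearMap.range (V.map (s - ε) (s + ε) (by linarith)))
    (q := LinearMap.range (V.map (t - ε) (t + ε) (by linarith)))
    (by
      rintro x ⟨y, rfl⟩
      refine ⟨V.map (s - ε) (t - ε) (by linarith) y, ?_⟩
      have h1 := LinearMap.congr_fun
        (V.map_comp (s - ε) (t - ε) (t + ε) (by linarith) (by linarith)) y
      have h2 := LinearMap.congr_fun
        (V.map_comp (s - ε) (s + ε) (t + ε) (by linarith) (by linarith)) y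
      simp only [LinearMap.comp_apply] at h1 h2
      rw [h1, h2])
  map_id t := by
    refine LinearMap.ext fun x => Subtype.ext ?_
    have := LinearMap.congr_fun (V.map_id (t + ε)) x.1
    simpa [LinearMap.restrict_apply] using this
  map_comp r s t h1 h2 := by
    refine LinearMap.ext fun x => Subtype.ext ?_
    have := LinearMap.congr_fun
      (V.map_comp (r + ε) (s + ε) (t + ε) (by linarith) (by linarith)) x.1
    simpa [LinearMap.restrict_apply] using this

end Interleaving

section Webb

def webbSubmodule (k : Type) [Field k] (t : ℤ) : Submodule k (ℕ → k) where
  carrier := {x | ∀ i : ℕ, (i : ℤ) < -t → x i = 0}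
  add_mem' := by
    intro x y hx hy i hi
    simp [Pi.add_apply, hx i hi, hy i hi]
  zero_mem' := by
    intro i hi
    rfl
  smul_mem' := by
    intro c x hx i hi
    simp [Pi.smul_apply, hx i hi]

noncomputable def webbModule (k : Type) [Field k] : PersMod k ↥{n : ℤ | n ≤ 0} where
  space t := ↥(webbSubmodule k t.1)
  addCommGroup := fun _ => inferInstance
  module := fun _ => inferInstance
  map s t h := Submodule.inclusion (by
    intro x hx
    have hx' : ∀ i : ℕ, (i : ℤ) < -s.1 → x i = 0 := hx
    intro i hi
    exact hx' i (lt_of_lt_of_le hi (neg_le_neg h)))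
  map_id t := LinearMap.ext fun x => rfl
  map_comp r s t h1 h2 := LinearMap.ext fun x => rfl

end Webb

section Decorated

/-- `decMem t x` : the real number `t` belongs to the interval described by the
decorated pair `x = ((p, εp), (q, εq))`, where the decoration `false` means `⁻`
and `true` means `⁺`. -/
def decMem (t : ℝ) (x : (EReal × Bool) × (EReal × Bool)) : Prop :=
  (x.1.1 < (t : EReal) ∨ (x.1.1 = (t : EReal) ∧ x.1.2 = false)) ∧
  ((t : EReal) < x.2.1 ∨ ((t : EReal) = x.2.1 ∧ x.2.2 = true))

/-- A valid decorated pair: the left coordinate is `p⁻`/`p⁺` for a real `p` or `−∞⁺`,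
the right coordinate is `q⁻`/`q⁺` for a real `q` or `+∞⁻`, and the corresponding
interval is nonempty (i.e. `p* < q*`). -/
def ValidDec (x : (EReal × Bool) × (EReal × Bool)) : Prop :=
  (x.1.1 = ⊥ → x.1.2 = true) ∧ x.1.1 ≠ ⊤ ∧ (x.2.1 = ⊤ → x.2.2 = false) ∧ x.2.1 ≠ ⊥ ∧
  {t : ℝ | decMem t x}.Nonempty

/-- The decorated pair `x` belongs to the rectangle `[a,b] × [c,d]`, i.e.
`[b,c] ⊆ ⟨p*,q*⟩ ⊆ (a,d)`. -/
def decInRect (x : (EReal × Bool) × (EReal × Bool)) (a : EReal) (b c : ℝ) (d : EReal) : Prop :=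
  (∀ t ∈ Set.Icc b c, decMem t x) ∧
  (∀ t : ℝ, decMem t x → a < (t : EReal) ∧ (t : EReal) < d)

/-- `Dgm` is (a labelling of) the decorated persistence diagram of `V`. -/
def IsDgmOf {k : Type} [Field k] (V : PersMod k ℝ) {ι : Type}
    (Dgm : ι → (EReal × Bool) × (EReal × Bool)) : Prop :=
  (∀ i, ValidDec (Dgm i)) ∧
  ∀ (a : EReal) (b c : ℝ) (d : EReal), a < (b : EReal) → b ≤ c → (c : EReal) < d →
    persMeasure V a b c d = ecard {i : ι // decInRect (Dgm i) a b c d}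

end Decorated

section RMeasure

/-- `[a,b] × [c,d]` is a (nondegenerate) rectangle contained in `D`. -/
def RectIn (D : Set (ℝ × ℝ)) (a b c d : ℝ) : Prop :=
  a < b ∧ c < d ∧ Set.Icc a b ×ˢ Set.Icc c d ⊆ D

/-- An r-measure on `D`: additivity under horizontal and vertical splitting. -/
def IsRMeasure (D : Set (ℝ × ℝ)) (μ : ℝ → ℝ → ℝ → ℝ → ℕ∞) : Prop :=
  (∀ a p b c d, a < p → p < b → RectIn D a b c d → μ a b c d = μ a p c d + μ p b c d) ∧
  (∀ a b c q d, c < q → q < d → RectIn D a b c d → μ a b c d = μ a b c q + μ a b q d)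

/-- Membership of a decorated point of the plane (`Bool` decoration: `true` = `⁺`,
`false` = `⁻`) in the closed rectangle `[a,b] × [c,d]`. -/
def dptMem (x : (ℝ × Bool) × (ℝ × Bool)) (a b c d : ℝ) : Prop :=
  a ≤ x.1.1 ∧ x.1.1 ≤ b ∧ c ≤ x.2.1 ∧ x.2.1 ≤ d ∧
  (x.1.1 = a → x.1.2 = true) ∧ (x.1.1 = b → x.1.2 = false) ∧
  (x.2.1 = c → x.2.2 = true) ∧ (x.2.1 = d → x.2.2 = false)

/-- The r-interior `D•` of `D`: decorated points contained in some rectangle of `D`. -/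
def rInt (D : Set (ℝ × ℝ)) : Set ((ℝ × Bool) × (ℝ × Bool)) :=
  {x | ∃ a b c d, RectIn D a b c d ∧ dptMem x a b c d}

/-- The number of decorated points, counted with multiplicity `m`, lying in the
rectangle `[a,b] × [c,d]`. -/
noncomputable def dcount (m : (ℝ × Bool) × (ℝ × Bool) → ℕ) (a b c d : ℝ) : ℕ∞ :=
  ecard (Σ x : {x : (ℝ × Bool) × (ℝ × Bool) // dptMem x a b c d}, Fin (m x.1))

end RMeasure

----------------------------------------------------------------
-- auxiliary development
----------------------------------------------------------------

section EcardLemmas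

lemma ecard_congr {α β : Type} (e : α ≃ β) : ecard α = ecard β :=
  Cardinal.toENat_congr e

lemma ecard_sum (α β : Type) : ecard (α ⊕ β) = ecard α + ecard β := by
  unfold ecard
  rw [Cardinal.mk_sum, Cardinal.lift_id, Cardinal.lift_id, map_add]

lemma ecard_fin (n : ℕ) : ecard (Fin n) = n := by
  unfold ecard
  rw [Cardinal.mk_fin, Cardinal.toENat_nat]

lemma ecard_of_isEmpty (α : Type) [IsEmpty α] : ecard α = 0 := by
  unfold ecard
  simp

lemma ecard_le_of_injective {α β : Type} (f : α → β) (hf : Function.Injective f) :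
    ecard α ≤ ecard β :=
  Cardinal.toENat.monotone' (Cardinal.mk_le_of_injective hf)

lemma finite_of_ecard_ne_top {α : Type} (h : ecard α ≠ ⊤) : Finite α := by
  unfold ecard at h
  rw [Ne, Cardinal.toENat_eq_top, not_le, Cardinal.lt_aleph0_iff_finite] at h
  exact h

end EcardLemmas

section PM

/-- 1-D decorated membership. -/
def pm (u : ℝ × Bool) (a b : ℝ) : Prop :=
  a ≤ u.1 ∧ u.1 ≤ b ∧ (u.1 = a → u.2 = true) ∧ (u.1 = b → u.2 = false)

lemma dptMem_iff {x : (ℝ × Bool) × (ℝ × Bool)} {a b c d : ℝ} :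
    dptMem x a b c d ↔ pm x.1 a b ∧ pm x.2 c d := by
  unfold dptMem pm; tauto

lemma pm_mono {u : ℝ × Bool} {a b a' b' : ℝ} (ha : a ≤ a') (hb : b' ≤ b)
    (h : pm u a' b') : pm u a b := by
  obtain ⟨h1, h2, h3, h4⟩ := h
  refine ⟨le_trans ha h1, le_trans h2 hb, fun h5 => h3 (le_antisymm ?_ h1),
    fun h5 => h4 (le_antisymm h2 ?_)⟩
  · rw [h5]; exact ha
  · rw [h5]; exact hb

lemma pm_half {u : ℝ × Bool} {a b p : ℝ} (h : pm u a b) (hap : a < p) (hpb : p < b) :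
    pm u a p ∨ pm u p b := by
  obtain ⟨h1, h2, h3, h4⟩ := h
  rcases lt_trichotomy u.1 p with hlt | heq | hgt
  · exact Or.inl ⟨h1, hlt.le, h3, fun h5 => absurd h5 hlt.ne⟩
  · cases hu : u.2 with
    | false => exact Or.inl ⟨h1, heq.le, fun h5 => absurd (h5 ▸ heq.symm ▸ hap) (lt_irrefl _),
        fun _ => hu⟩
    | true => exact Or.inr ⟨heq.ge, h2, fun _ => hu,
        fun h5 => absurd (h5 ▸ heq ▸ hpb) (lt_irrefl _)⟩
  · exact Or.inr ⟨hgt.le, h2, fun h5 => absurd h5 hgt.ne', h4⟩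

lemma pm_half_not {u : ℝ × Bool} {a b p : ℝ} (h1 : pm u a p) (h2 : pm u p b) : False := by
  have hup : u.1 = p := le_antisymm h1.2.1 h2.1
  have := h1.2.2.2 hup
  have := h2.2.2.1 hup
  simp_all

lemma pm_lt {u : ℝ × Bool} {a b : ℝ} (h : pm u a b) : a < b := by
  rcases lt_or_eq_of_le (h.1.trans h.2.1) with h' | h'
  · exact h'
  · exfalso
    have e1 : u.1 = a := le_antisymm (h'.symm ▸ h.2.1) h.1
    have e2 := h.2.2.1 e1
    have e3 := h.2.2.2 (e1.trans h')
    simp_all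

lemma pm_sep {u v : ℝ × Bool} {a b : ℝ} (huv : u ≠ v) (hu : pm u a b) (hv : pm v a b) :
    ∃ p, a < p ∧ p < b ∧ ((pm u a p ∧ pm v p b) ∨ (pm v a p ∧ pm u p b)) := by
  rcases lt_trichotomy u.1 v.1 with hlt | heq | hgt
  · refine ⟨(u.1 + v.1) / 2, by linarith [hu.1], by linarith [hv.2.1], Or.inl ⟨?_, ?_⟩⟩
    · exact ⟨hu.1, by linarith, hu.2.2.1, fun h5 => by linarith⟩
    · exact ⟨by linarith, hv.2.1, fun h5 => by linarith, hv.2.2.2⟩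
  · -- same coordinate, different decoration
    have hne : u.2 ≠ v.2 := by
      intro h
      exact huv (Prod.ext heq h)
    have hap : a < u.1 := by
      rcases lt_or_eq_of_le hu.1 with h | h
      · exact h
      · exfalso
        have h1 := hu.2.2.1 h.symm
        have h2 := hv.2.2.1 (heq ▸ h.symm)
        rw [h1, h2] at hne
        exact hne rfl
    have hpb : u.1 < b := by
      rcases lt_or_eq_of_le hu.2.1 with h | h
      · exact h
      · exfalso
        have h1 := hu.2.2.2 h
        have h2 := hv.2.2.2 (heq ▸ h)
        rw [h1, h2] at hne
        exact hne rfl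
    refine ⟨u.1, hap, hpb, ?_⟩
    have hvb : v.1 < b := heq ▸ hpb
    have hav : a < v.1 := heq ▸ hap
    cases hu2 : u.2 with
    | false =>
      have hv2 : v.2 = true := by
        cases hv2 : v.2 with
        | false => rw [hu2, hv2] at hne; exact absurd rfl hne
        | true => rfl
      refine Or.inl ⟨⟨hu.1, le_refl _, fun h => absurd h hap.ne', fun _ => hu2⟩, ?_⟩
      exact ⟨heq.le, hv.2.1, fun _ => hv2, fun h => absurd h hvb.ne⟩
    | true =>
      have hv2 : v.2 = false := by
        cases hv2 : v.2 with
        | true => rw [hu2, hv2] at hne; exact absurd rfl hne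
        | false => rfl
      refine Or.inr ⟨⟨hv.1, heq.ge, fun h => absurd h hav.ne', fun _ => hv2⟩,
        ⟨le_refl _, hu.2.1, fun _ => hu2, fun h => absurd h hpb.ne⟩⟩
  · refine ⟨(v.1 + u.1) / 2, by linarith [hv.1], by linarith [hu.2.1], Or.inr ⟨?_, ?_⟩⟩
    · exact ⟨hv.1, by linarith, hv.2.2.1, fun h5 => by linarith⟩
    · exact ⟨by linarith, hu.2.1, fun h5 => by linarith, hu.2.2.2⟩

lemma pm_inter {u : ℝ × Bool} {a b a' b' : ℝ} (h : pm u a b) (h' : pm u a' b') :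
    max a a' < min b b' ∧ pm u (max a a') (min b b') := by
  have h1 : max a a' ≤ u.1 := max_le h.1 h'.1
  have h2 : u.1 ≤ min b b' := le_min h.2.1 h'.2.1
  have hmax : u.1 = max a a' → u.2 = true := by
    intro he
    rcases max_choice a a' with hc | hc
    · exact h.2.2.1 (he.trans hc)
    · exact h'.2.2.1 (he.trans hc)
  have hmin : u.1 = min b b' → u.2 = false := by
    intro he
    rcases min_choice b b' with hc | hc
    · exact h.2.2.2 (he.trans hc)
    · exact h'.2.2.2 (he.trans hc)
  refine ⟨?_, h1, h2, hmax, hmin⟩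
  rcases lt_or_eq_of_le (le_trans h1 h2) with h3 | h3
  · exact h3
  · exfalso
    have e1 : u.1 = max a a' := le_antisymm (h3 ▸ h2) h1
    have e2 : u.1 = min b b' := le_antisymm h2 (h3 ▸ h1)
    have := hmax e1
    have := hmin e2
    simp_all

end PM

section RectLemmas

variable {D : Set (ℝ × ℝ)} {μ : ℝ → ℝ → ℝ → ℝ → ℕ∞}

lemma RectIn.sub {a b c d a' b' c' d' : ℝ} (h : RectIn D a b c d)
    (h1 : a ≤ a') (h2 : a' < b') (h3 : b' ≤ b) (h4 : c ≤ c') (h5 : c' < d') (h6 : d' ≤ d) :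
    RectIn D a' b' c' d' := by
  refine ⟨h2, h5, le_trans ?_ h.2.2⟩
  exact Set.prod_mono (Set.Icc_subset_Icc h1 h3) (Set.Icc_subset_Icc h4 h6)

lemma mu_mono (hμ : IsRMeasure D μ) {a b c d a' b' c' d' : ℝ} (h : RectIn D a b c d)
    (h1 : a ≤ a') (h2 : a' < b') (h3 : b' ≤ b) (h4 : c ≤ c') (h5 : c' < d') (h6 : d' ≤ d) :
    μ a' b' c' d' ≤ μ a b c d := by
  have hcd : c < d := h.2.1
  have ha'b : a' < b := lt_of_lt_of_le h2 h3
  -- step 1 : shrink left edge (full height)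
  have s1 : μ a' b c d ≤ μ a b c d := by
    rcases eq_or_lt_of_le h1 with he | he
    · rw [he]
    · rw [hμ.1 a a' b c d he ha'b h]
      exact le_add_self
  -- step 2 : shrink right edge
  have R1 : RectIn D a' b c d := h.sub h1 ha'b le_rfl le_rfl hcd le_rfl
  have s2 : μ a' b' c d ≤ μ a' b c d := by
    rcases eq_or_lt_of_le h3 with he | he
    · rw [he]
    · rw [hμ.1 a' b' b c d h2 he R1]
      exact le_self_add
  -- step 3 : shrink bottom edge
  have R2 : RectIn D a' b' c d := h.sub h1 h2 h3 le_rfl hcd le_rfl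
  have hc'd : c' < d := lt_of_lt_of_le h5 h6
  have s3 : μ a' b' c' d ≤ μ a' b' c d := by
    rcases eq_or_lt_of_le h4 with he | he
    · rw [he]
    · rw [hμ.2 a' b' c c' d he hc'd R2]
      exact le_add_self
  -- step 4 : shrink top edge
  have R3 : RectIn D a' b' c' d := h.sub h1 h2 h3 h4 hc'd le_rfl
  have s4 : μ a' b' c' d' ≤ μ a' b' c' d := by
    rcases eq_or_lt_of_le h6 with he | he
    · rw [he]
    · rw [hμ.2 a' b' c' d' d h5 he R3]
      exact le_self_add
  exact le_trans s4 (le_trans s3 (le_trans s2 s1))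

end RectLemmas

section DptLemmas

variable {D : Set (ℝ × ℝ)}

lemma dpt_mono {z : (ℝ × Bool) × (ℝ × Bool)} {a b c d a' b' c' d' : ℝ}
    (h1 : a ≤ a') (h3 : b' ≤ b) (h4 : c ≤ c') (h6 : d' ≤ d)
    (h : dptMem z a' b' c' d') : dptMem z a b c d := by
  rw [dptMem_iff] at h ⊢
  exact ⟨pm_mono h1 h3 h.1, pm_mono h4 h6 h.2⟩

lemma dpt_halfH {z : (ℝ × Bool) × (ℝ × Bool)} {a b c d p : ℝ}
    (h : dptMem z a b c d) (h1 : a < p) (h2 : p < b) :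
    dptMem z a p c d ∨ dptMem z p b c d := by
  rw [dptMem_iff] at h ⊢
  rw [dptMem_iff]
  rcases pm_half h.1 h1 h2 with h' | h'
  · exact Or.inl ⟨h', h.2⟩
  · exact Or.inr ⟨h', h.2⟩

lemma dpt_halfH_not {z : (ℝ × Bool) × (ℝ × Bool)} {a b c d p : ℝ}
    (h : dptMem z a p c d) (h' : dptMem z p b c d) : False :=
  pm_half_not (dptMem_iff.1 h).1 (dptMem_iff.1 h').1

lemma dpt_halfV {z : (ℝ × Bool) × (ℝ × Bool)} {a b c d q : ℝ}
    (h : dptMem z a b c d) (h1 : c < q) (h2 : q < d) :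
    dptMem z a b c q ∨ dptMem z a b q d := by
  rw [dptMem_iff] at h ⊢
  rw [dptMem_iff]
  rcases pm_half h.2 h1 h2 with h' | h'
  · exact Or.inl ⟨h.1, h'⟩
  · exact Or.inr ⟨h.1, h'⟩

lemma dpt_halfV_not {z : (ℝ × Bool) × (ℝ × Bool)} {a b c d q : ℝ}
    (h : dptMem z a b c q) (h' : dptMem z a b q d) : False :=
  pm_half_not (dptMem_iff.1 h).2 (dptMem_iff.1 h').2

/-- Two distinct decorated points in a rectangle can be separated by splitting it. -/
lemma dpt_sep {x y : (ℝ × Bool) × (ℝ × Bool)} {a b c d : ℝ} (hxy : x ≠ y)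
    (hx : dptMem x a b c d) (hy : dptMem y a b c d) :
    ∃ a1 b1 c1 d1 a2 b2 c2 d2,
      a ≤ a1 ∧ a1 < b1 ∧ b1 ≤ b ∧ c ≤ c1 ∧ c1 < d1 ∧ d1 ≤ d ∧
      a ≤ a2 ∧ a2 < b2 ∧ b2 ≤ b ∧ c ≤ c2 ∧ c2 < d2 ∧ d2 ≤ d ∧
      dptMem x a1 b1 c1 d1 ∧ dptMem y a2 b2 c2 d2 ∧
      (∀ z, dptMem z a1 b1 c1 d1 → dptMem z a2 b2 c2 d2 → False) ∧
      (∀ (D : Set (ℝ × ℝ)) (μ : ℝ → ℝ → ℝ → ℝ → ℕ∞), IsRMeasure D μ → RectIn D a b c d →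
        μ a b c d = μ a1 b1 c1 d1 + μ a2 b2 c2 d2) := by
  rw [dptMem_iff] at hx hy
  have hab : a < b := pm_lt hx.1
  have hcd : c < d := pm_lt hx.2
  by_cases h1 : x.1 = y.1
  · -- separate in the second coordinate
    have h2 : x.2 ≠ y.2 := fun h => hxy (Prod.ext h1 h)
    obtain ⟨q, hcq, hqd, hor⟩ := pm_sep h2 hx.2 hy.2
    rcases hor with ⟨hxq, hyq⟩ | ⟨hyq, hxq⟩
    · exact ⟨a, b, c, q, a, b, q, d, le_rfl, hab, le_rfl, le_rfl, hcq, hqd.le,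
        le_rfl, hab, le_rfl, hcq.le, hqd, le_rfl,
        dptMem_iff.2 ⟨hx.1, hxq⟩, dptMem_iff.2 ⟨hy.1, hyq⟩,
        fun z hz hz' => dpt_halfV_not hz hz',
        fun D μ hμ hR => hμ.2 a b c q d hcq hqd hR⟩
    · exact ⟨a, b, q, d, a, b, c, q, le_rfl, hab, le_rfl, hcq.le, hqd, le_rfl,
        le_rfl, hab, le_rfl, le_rfl, hcq, hqd.le,
        dptMem_iff.2 ⟨hx.1, hxq⟩, dptMem_iff.2 ⟨hy.1, hyq⟩,
        fun z hz hz' => dpt_halfV_not hz' hz,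
        fun D μ hμ hR => by rw [hμ.2 a b c q d hcq hqd hR, add_comm]⟩
  · -- separate in the first coordinate
    obtain ⟨p, hap, hpb, hor⟩ := pm_sep h1 hx.1 hy.1
    rcases hor with ⟨hxp, hyp⟩ | ⟨hyp, hxp⟩
    · exact ⟨a, p, c, d, p, b, c, d, le_rfl, hap, hpb.le, le_rfl, hcd, le_rfl,
        hap.le, hpb, le_rfl, le_rfl, hcd, le_rfl,
        dptMem_iff.2 ⟨hxp, hx.2⟩, dptMem_iff.2 ⟨hyp, hy.2⟩,
        fun z hz hz' => dpt_halfH_not hz hz',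
        fun D μ hμ hR => hμ.1 a p b c d hap hpb hR⟩
    · exact ⟨p, b, c, d, a, p, c, d, hap.le, hpb, le_rfl, le_rfl, hcd, le_rfl,
        le_rfl, hap, hpb.le, le_rfl, hcd, le_rfl,
        dptMem_iff.2 ⟨hxp, hx.2⟩, dptMem_iff.2 ⟨hyp, hy.2⟩,
        fun z hz hz' => dpt_halfH_not hz' hz,
        fun D μ hμ hR => by rw [hμ.1 a p b c d hap hpb hR, add_comm]⟩

end DptLemmas

section CountLemmas

abbrev DPt := (ℝ × Bool) × (ℝ × Bool)

lemma ecard_split {P Q R : DPt → Prop} (m : DPt → ℕ)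
    (hcov : ∀ z, P z ↔ Q z ∨ R z) (hdis : ∀ z, Q z → R z → False) :
    ecard (Σ x : {x : DPt // P x}, Fin (m x.1))
      = ecard (Σ x : {x : DPt // Q x}, Fin (m x.1))
        + ecard (Σ x : {x : DPt // R x}, Fin (m x.1)) := by
  rw [← ecard_sum]
  refine ecard_congr ?_
  refine
    { toFun := fun s =>
        if h : Q s.1.1 then Sum.inl ⟨⟨s.1.1, h⟩, s.2⟩
        else Sum.inr ⟨⟨s.1.1, ((hcov s.1.1).1 s.1.2).resolve_left h⟩, s.2⟩
      invFun := fun t =>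
        match t with
        | .inl s => ⟨⟨s.1.1, (hcov s.1.1).2 (Or.inl s.1.2)⟩, s.2⟩
        | .inr s => ⟨⟨s.1.1, (hcov s.1.1).2 (Or.inr s.1.2)⟩, s.2⟩
      left_inv := by
        rintro ⟨⟨z, hz⟩, i⟩
        by_cases h : Q z <;> simp [h]
      right_inv := by
        rintro (⟨⟨z, hz⟩, i⟩ | ⟨⟨z, hz⟩, i⟩)
        · simp [hz]
        · have : ¬ Q z := fun h => hdis z h hz
          simp [this] }

lemma ecard_sigma_zero {P : DPt → Prop} (m : DPt → ℕ) (h : ∀ z, P z → m z = 0) :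
    ecard (Σ x : {x : DPt // P x}, Fin (m x.1)) = 0 := by
  have : IsEmpty (Σ x : {x : DPt // P x}, Fin (m x.1)) := by
    refine ⟨fun s => ?_⟩
    have h0 := h s.1.1 s.1.2
    exact absurd s.2.2 (by omega)
  exact ecard_of_isEmpty _

lemma ecard_sigma_single (m : DPt → ℕ) (x₀ : DPt) :
    ecard (Σ x : {x : DPt // x = x₀}, Fin (m x.1)) = m x₀ := by
  rw [← ecard_fin (m x₀)]
  refine ecard_congr ?_
  refine
    { toFun := fun s => Fin.cast (congrArg m s.1.2) s.2
      invFun := fun i => ⟨⟨x₀, rfl⟩, i⟩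
      left_inv := by rintro ⟨⟨z, rfl⟩, i⟩; rfl
      right_inv := by intro i; rfl }

lemma ecard_sigma_congr {P : DPt → Prop} (m m' : DPt → ℕ) (h : ∀ z, P z → m z = m' z) :
    ecard (Σ x : {x : DPt // P x}, Fin (m x.1))
      = ecard (Σ x : {x : DPt // P x}, Fin (m' x.1)) := by
  refine ecard_congr (Equiv.sigmaCongrRight fun s => finCongr (h s.1 s.2))

lemma dcount_point_le {m : DPt → ℕ} {x₀ : DPt} {a b c d : ℝ} (h : dptMem x₀ a b c d) :
    (m x₀ : ℕ∞) ≤ dcount m a b c d := by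
  rw [← ecard_fin (m x₀)]
  refine ecard_le_of_injective (fun i => ⟨⟨x₀, h⟩, i⟩) ?_
  intro i j hij
  cases hij
  rfl

/-- If the multiplicity changes only at `x₀`, where it grows by `k`, the count grows by `k`. -/
lemma dcount_update {m m' : DPt → ℕ} {x₀ : DPt} {k : ℕ} {a b c d : ℝ}
    (hx₀ : dptMem x₀ a b c d) (heq : ∀ x, x ≠ x₀ → m x = m' x) (hk : m x₀ = m' x₀ + k) :
    dcount m a b c d = dcount m' a b c d + k := by
  have cov : ∀ z, dptMem z a b c d ↔ (dptMem z a b c d ∧ z ≠ x₀) ∨ z = x₀ := by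
    intro z
    constructor
    · intro h
      by_cases hz : z = x₀
      · exact Or.inr hz
      · exact Or.inl ⟨h, hz⟩
    · rintro (⟨h, _⟩ | rfl)
      · exact h
      · exact hx₀
  have dis : ∀ z, (dptMem z a b c d ∧ z ≠ x₀) → z = x₀ → False := fun z h h' => h.2 h'
  unfold dcount
  rw [ecard_split m cov dis, ecard_split m' cov dis, ecard_sigma_single,
    ecard_sigma_single, ecard_sigma_congr m m' (fun z hz => heq z hz.2), hk]
  push_cast
  ring

/-- The set of points with positive multiplicity in a rectangle of finite count is finite. -/
lemma dcount_support_finite {m : DPt → ℕ} {a b c d : ℝ} (h : dcount m a b c d ≠ ⊤) :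
    {y : DPt | dptMem y a b c d ∧ m y ≠ 0}.Finite := by
  have hfin : Finite (Σ x : {x : DPt // dptMem x a b c d}, Fin (m x.1)) :=
    finite_of_ecard_ne_top h
  have : Finite {y : DPt | dptMem y a b c d ∧ m y ≠ 0} := by
    refine Finite.of_injective
      (fun y => (⟨⟨y.1, y.2.1⟩, ⟨0, Nat.pos_of_ne_zero y.2.2⟩⟩ :
        Σ x : {x : DPt // dptMem x a b c d}, Fin (m x.1))) ?_
    intro y z hyz
    ext : 1
    exact congrArg (fun s => s.1.1) hyz
  exact Set.toFinite _

lemma dcount_single {m : DPt → ℕ} {x₀ : DPt} {a b c d : ℝ} (hx₀ : dptMem x₀ a b c d)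
    (h : ∀ y, dptMem y a b c d → y ≠ x₀ → m y = 0) :
    dcount m a b c d = m x₀ := by
  have cov : ∀ z, dptMem z a b c d ↔ (dptMem z a b c d ∧ z ≠ x₀) ∨ z = x₀ := by
    intro z
    constructor
    · intro hz
      by_cases hz' : z = x₀
      · exact Or.inr hz'
      · exact Or.inl ⟨hz, hz'⟩
    · rintro (⟨hz, _⟩ | rfl)
      · exact hz
      · exact hx₀
  have dis : ∀ z, (dptMem z a b c d ∧ z ≠ x₀) → z = x₀ → False := fun z hz h' => hz.2 h'
  unfold dcount
  rw [ecard_split m cov dis, ecard_sigma_zero m (fun z hz => h z hz.1 hz.2),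
    ecard_sigma_single, zero_add]

lemma dcount_zero {m : DPt → ℕ} {a b c d : ℝ} (h : ∀ y, dptMem y a b c d → m y = 0) :
    dcount m a b c d = 0 := by
  unfold dcount
  exact ecard_sigma_zero m h

/-- `dcount` is always an r-measure (additivity is pure counting). -/
lemma dcount_additive (D : Set (ℝ × ℝ)) (m : DPt → ℕ) :
    IsRMeasure D (fun a b c d => dcount m a b c d) := by
  constructor
  · intro a p b c d hap hpb _
    have cov : ∀ z, dptMem z a b c d ↔ dptMem z a p c d ∨ dptMem z p b c d := by
      intro z
      constructor
      · intro hz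
        exact dpt_halfH hz hap hpb
      · rintro (hz | hz)
        · exact dpt_mono le_rfl hpb.le le_rfl le_rfl hz
        · exact dpt_mono hap.le le_rfl le_rfl le_rfl hz
    exact ecard_split m cov (fun z => dpt_halfH_not)
  · intro a b c q d hcq hqd _
    have cov : ∀ z, dptMem z a b c d ↔ dptMem z a b c q ∨ dptMem z a b q d := by
      intro z
      constructor
      · intro hz
        exact dpt_halfV hz hcq hqd
      · rintro (hz | hz)
        · exact dpt_mono le_rfl le_rfl le_rfl hqd.le hz
        · exact dpt_mono le_rfl le_rfl hcq.le le_rfl hz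
    exact ecard_split m cov (fun z => dpt_halfV_not)

end CountLemmas

section MDef

variable {D : Set (ℝ × ℝ)} {μ : ℝ → ℝ → ℝ → ℝ → ℕ∞}

/-- Values of `μ` on rectangles of `D` containing the decorated point `x`. -/
def mSet (D : Set (ℝ × ℝ)) (μ : ℝ → ℝ → ℝ → ℝ → ℕ∞) (x : DPt) : Set ℕ :=
  {n | ∃ a b c d, RectIn D a b c d ∧ dptMem x a b c d ∧ μ a b c d = (n : ℕ∞)}

noncomputable def mNat (D : Set (ℝ × ℝ)) (μ : ℝ → ℝ → ℝ → ℝ → ℕ∞) (x : DPt) : ℕ :=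
  sInf (mSet D μ x)

noncomputable def mFun (D : Set (ℝ × ℝ)) (μ : ℝ → ℝ → ℝ → ℝ → ℕ∞) (x : DPt) : ℕ :=
  if x ∈ rInt D then mNat D μ x else 0

lemma mSet_nonempty (hfin : ∀ a b c d, RectIn D a b c d → μ a b c d ≠ ⊤)
    {x : DPt} (hx : x ∈ rInt D) : (mSet D μ x).Nonempty := by
  obtain ⟨a, b, c, d, hR, hm⟩ := hx
  exact ⟨(μ a b c d).toNat, a, b, c, d, hR, hm, (ENat.coe_toNat (hfin a b c d hR)).symm⟩

lemma mNat_mem (hfin : ∀ a b c d, RectIn D a b c d → μ a b c d ≠ ⊤)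
    {x : DPt} (hx : x ∈ rInt D) :
    ∃ a b c d, RectIn D a b c d ∧ dptMem x a b c d ∧ μ a b c d = (mNat D μ x : ℕ∞) :=
  Nat.sInf_mem (mSet_nonempty hfin hx)

lemma mNat_le (hfin : ∀ a b c d, RectIn D a b c d → μ a b c d ≠ ⊤)
    {x : DPt} {a b c d : ℝ} (hR : RectIn D a b c d) (hm : dptMem x a b c d) :
    (mNat D μ x : ℕ∞) ≤ μ a b c d := by
  have hne := hfin a b c d hR
  have hmem : (μ a b c d).toNat ∈ mSet D μ x :=
    ⟨a, b, c, d, hR, hm, (ENat.coe_toNat hne).symm⟩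
  have h1 : mNat D μ x ≤ (μ a b c d).toNat := Nat.sInf_le hmem
  calc (mNat D μ x : ℕ∞) ≤ ((μ a b c d).toNat : ℕ∞) := by exact_mod_cast h1
    _ = μ a b c d := ENat.coe_toNat hne

lemma mFun_eq {x : DPt} (hx : x ∈ rInt D) : mFun D μ x = mNat D μ x := if_pos hx

end MDef

section Bisection

variable {D : Set (ℝ × ℝ)} {μ : ℝ → ℝ → ℝ → ℝ → ℕ∞}

/-- A rectangle in `D` on which `μ` does not vanish. -/
structure BRect (D : Set (ℝ × ℝ)) (μ : ℝ → ℝ → ℝ → ℝ → ℕ∞) where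
  a : ℝ
  b : ℝ
  c : ℝ
  d : ℝ
  rect : RectIn D a b c d
  pos : μ a b c d ≠ 0

lemma bstep (hμ : IsRMeasure D μ) (r : BRect D μ) :
    ∃ r' : BRect D μ, r.a ≤ r'.a ∧ r'.b ≤ r.b ∧ r.c ≤ r'.c ∧ r'.d ≤ r.d ∧
      r'.b - r'.a = (r.b - r.a) / 2 ∧ r'.d - r'.c = (r.d - r.c) / 2 := by
  obtain ⟨a, b, c, d, hR, hpos⟩ := r
  have hab : a < b := hR.1
  have hcd : c < d := hR.2.1
  set p := (a + b) / 2 with hp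
  set q := (c + d) / 2 with hq
  have hap : a < p := by rw [hp]; linarith
  have hpb : p < b := by rw [hp]; linarith
  have hcq : c < q := by rw [hq]; linarith
  have hqd : q < d := by rw [hq]; linarith
  have Rl : RectIn D a p c d := hR.sub le_rfl hap hpb.le le_rfl hcd le_rfl
  have Rr : RectIn D p b c d := hR.sub hap.le hpb le_rfl le_rfl hcd le_rfl
  have e1 : μ a b c d = μ a p c d + μ p b c d := hμ.1 a p b c d hap hpb hR
  have e2 : μ a p c d = μ a p c q + μ a p q d := hμ.2 a p c q d hcq hqd Rl
  have e3 : μ p b c d = μ p b c q + μ p b q d := hμ.2 p b c q d hcq hqd Rr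
  have hxl : p - a = (b - a) / 2 := by rw [hp]; ring
  have hxr : b - p = (b - a) / 2 := by rw [hp]; ring
  have hyl : q - c = (d - c) / 2 := by rw [hq]; ring
  have hyr : d - q = (d - c) / 2 := by rw [hq]; ring
  by_cases h1 : μ a p c q = 0
  · by_cases h2 : μ a p q d = 0
    · by_cases h3 : μ p b c q = 0
      · by_cases h4 : μ p b q d = 0
        · exfalso
          apply hpos
          rw [e1, e2, e3, h1, h2, h3, h4]
          simp
        · exact ⟨⟨p, b, q, d, hR.sub hap.le hpb le_rfl hcq.le hqd le_rfl, h4⟩,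
            hap.le, le_rfl, hcq.le, le_rfl, by simpa using hxr, by simpa using hyr⟩
      · exact ⟨⟨p, b, c, q, hR.sub hap.le hpb le_rfl le_rfl hcq hqd.le, h3⟩,
          hap.le, le_rfl, le_rfl, hqd.le, by simpa using hxr, by simpa using hyl⟩
    · exact ⟨⟨a, p, q, d, hR.sub le_rfl hap hpb.le hcq.le hqd le_rfl, h2⟩,
        le_rfl, hpb.le, hcq.le, le_rfl, by simpa using hxl, by simpa using hyr⟩
  · exact ⟨⟨a, p, c, q, hR.sub le_rfl hap hpb.le le_rfl hcq hqd.le, h1⟩,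
      le_rfl, hpb.le, le_rfl, hqd.le, by simpa using hxl, by simpa using hyl⟩

noncomputable def bseq (hμ : IsRMeasure D μ) (r0 : BRect D μ) : ℕ → BRect D μ
  | 0 => r0
  | n + 1 => (bstep hμ (bseq hμ r0 n)).choose

lemma bseq_spec (hμ : IsRMeasure D μ) (r0 : BRect D μ) (n : ℕ) :
    (bseq hμ r0 n).a ≤ (bseq hμ r0 (n + 1)).a ∧
    (bseq hμ r0 (n + 1)).b ≤ (bseq hμ r0 n).b ∧
    (bseq hμ r0 n).c ≤ (bseq hμ r0 (n + 1)).c ∧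
    (bseq hμ r0 (n + 1)).d ≤ (bseq hμ r0 n).d ∧
    (bseq hμ r0 (n + 1)).b - (bseq hμ r0 (n + 1)).a = ((bseq hμ r0 n).b - (bseq hμ r0 n).a) / 2 ∧
    (bseq hμ r0 (n + 1)).d - (bseq hμ r0 (n + 1)).c = ((bseq hμ r0 n).d - (bseq hμ r0 n).c) / 2 :=
  (bstep hμ (bseq hμ r0 n)).choose_spec

lemma bseq_size (hμ : IsRMeasure D μ) (r0 : BRect D μ) (n : ℕ) :
    (bseq hμ r0 n).b - (bseq hμ r0 n).a = (r0.b - r0.a) / 2 ^ n ∧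
    (bseq hμ r0 n).d - (bseq hμ r0 n).c = (r0.d - r0.c) / 2 ^ n := by
  induction n with
  | zero => simp [bseq]
  | succ n ih =>
    obtain ⟨-, -, -, -, h5, h6⟩ := bseq_spec hμ r0 n
    rw [h5, h6, ih.1, ih.2]
    constructor <;> · rw [pow_succ]; ring

end Bisection

section ZLoc

variable {D : Set (ℝ × ℝ)} {μ : ℝ → ℝ → ℝ → ℝ → ℕ∞}

/-- If every decorated point of `R` admits a rectangle of measure zero, then every
point of `R` has a neighbourhood size `δ` so that all small subrectangles near it
have measure zero. -/
lemma zloc (hμ : IsRMeasure D μ) {a b c d : ℝ} (hR : RectIn D a b c d)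
    (H : ∀ x : DPt, dptMem x a b c d →
      ∃ a' b' c' d', RectIn D a' b' c' d' ∧ dptMem x a' b' c' d' ∧ μ a' b' c' d' = 0)
    {u v : ℝ} (hu1 : a ≤ u) (hu2 : u ≤ b) (hv1 : c ≤ v) (hv2 : v ≤ d) :
    ∃ δ > 0, ∀ α β γ γ', a ≤ α → α < β → β ≤ b → c ≤ γ → γ < γ' → γ' ≤ d →
      u - δ ≤ α → β ≤ u + δ → v - δ ≤ γ → γ' ≤ v + δ → μ α β γ γ' = 0 := by
  -- quadrant lemmas
  have quadFF : ∃ δe > 0, ∀ α β γ γ', a ≤ α → α < β → β ≤ u → c ≤ γ → γ < γ' → γ' ≤ v →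
      u - δe ≤ α → v - δe ≤ γ → μ α β γ γ' = 0 := by
    by_cases hd : dptMem ((u, false), (v, false)) a b c d
    · obtain ⟨A, B, C, E, hQ, hmem, hz⟩ := H _ hd
      rw [dptMem_iff] at hmem
      have hAu : A < u := lt_of_le_of_ne hmem.1.1 (fun h => by simpa using hmem.1.2.2.1 h.symm)
      have hCv : C < v := lt_of_le_of_ne hmem.2.1 (fun h => by simpa using hmem.2.2.2.1 h.symm)
      refine ⟨min (u - A) (v - C), by simp [hAu, hCv], ?_⟩
      intro α β γ γ' _ hαβ hβu _ hγγ hγv hδα hδγ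
      have hle : μ α β γ γ' ≤ μ A B C E := by
        refine mu_mono hμ hQ ?_ hαβ ?_ ?_ hγγ ?_
        · have := min_le_left (u - A) (v - C); linarith
        · exact le_trans hβu hmem.1.2.1
        · have := min_le_right (u - A) (v - C); linarith
        · exact le_trans hγv hmem.2.2.1
      rw [hz] at hle
      exact nonpos_iff_eq_zero.1 hle
    · refine ⟨1, one_pos, ?_⟩
      intro α β γ γ' hαa hαβ hβu hγc hγγ hγv _ _
      exfalso
      apply hd
      refine dptMem_iff.2 ⟨⟨hu1, hu2, ?_, fun _ => rfl⟩, ⟨hv1, hv2, ?_, fun _ => rfl⟩⟩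
      · intro h; exfalso; linarith
      · intro h; exfalso; linarith
  have quadFT : ∃ δe > 0, ∀ α β γ γ', a ≤ α → α < β → β ≤ u → v ≤ γ → γ < γ' → γ' ≤ d →
      u - δe ≤ α → γ' ≤ v + δe → μ α β γ γ' = 0 := by
    by_cases hd : dptMem ((u, false), (v, true)) a b c d
    · obtain ⟨A, B, C, E, hQ, hmem, hz⟩ := H _ hd
      rw [dptMem_iff] at hmem
      have hAu : A < u := lt_of_le_of_ne hmem.1.1 (fun h => by simpa using hmem.1.2.2.1 h.symm)
      have hvE : v < E := lt_of_le_of_ne hmem.2.2.1 (fun h => by simpa using hmem.2.2.2.2 h)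
      refine ⟨min (u - A) (E - v), by simp [hAu, hvE], ?_⟩
      intro α β γ γ' _ hαβ hβu hvγ hγγ _ hδα hδγ
      have hle : μ α β γ γ' ≤ μ A B C E := by
        refine mu_mono hμ hQ ?_ hαβ ?_ ?_ hγγ ?_
        · have := min_le_left (u - A) (E - v); linarith
        · exact le_trans hβu hmem.1.2.1
        · exact le_trans hmem.2.1 hvγ
        · have := min_le_right (u - A) (E - v); linarith
      rw [hz] at hle
      exact nonpos_iff_eq_zero.1 hle
    · refine ⟨1, one_pos, ?_⟩
      intro α β γ γ' hαa hαβ hβu hvγ hγγ hγd _ _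
      exfalso
      apply hd
      refine dptMem_iff.2 ⟨⟨hu1, hu2, ?_, fun _ => rfl⟩, ⟨hv1, hv2, fun _ => rfl, ?_⟩⟩
      · intro h; exfalso; linarith
      · intro h; exfalso; linarith
  have quadTF : ∃ δe > 0, ∀ α β γ γ', u ≤ α → α < β → β ≤ b → c ≤ γ → γ < γ' → γ' ≤ v →
      β ≤ u + δe → v - δe ≤ γ → μ α β γ γ' = 0 := by
    by_cases hd : dptMem ((u, true), (v, false)) a b c d
    · obtain ⟨A, B, C, E, hQ, hmem, hz⟩ := H _ hd
      rw [dptMem_iff] at hmem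
      have huB : u < B := lt_of_le_of_ne hmem.1.2.1 (fun h => by simpa using hmem.1.2.2.2 h)
      have hCv : C < v := lt_of_le_of_ne hmem.2.1 (fun h => by simpa using hmem.2.2.2.1 h.symm)
      refine ⟨min (B - u) (v - C), by simp [huB, hCv], ?_⟩
      intro α β γ γ' huα hαβ _ _ hγγ hγv hδβ hδγ
      have hle : μ α β γ γ' ≤ μ A B C E := by
        refine mu_mono hμ hQ ?_ hαβ ?_ ?_ hγγ ?_
        · exact le_trans hmem.1.1 huα
        · have := min_le_left (B - u) (v - C); linarith
        · have := min_le_right (B - u) (v - C); linarith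
        · exact le_trans hγv hmem.2.2.1
      rw [hz] at hle
      exact nonpos_iff_eq_zero.1 hle
    · refine ⟨1, one_pos, ?_⟩
      intro α β γ γ' huα hαβ hβb hγc hγγ hγv _ _
      exfalso
      apply hd
      refine dptMem_iff.2 ⟨⟨hu1, hu2, fun _ => rfl, ?_⟩, ⟨hv1, hv2, ?_, fun _ => rfl⟩⟩
      · intro h; exfalso; linarith
      · intro h; exfalso; linarith
  have quadTT : ∃ δe > 0, ∀ α β γ γ', u ≤ α → α < β → β ≤ b → v ≤ γ → γ < γ' → γ' ≤ d →
      β ≤ u + δe → γ' ≤ v + δe → μ α β γ γ' = 0 := by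
    by_cases hd : dptMem ((u, true), (v, true)) a b c d
    · obtain ⟨A, B, C, E, hQ, hmem, hz⟩ := H _ hd
      rw [dptMem_iff] at hmem
      have huB : u < B := lt_of_le_of_ne hmem.1.2.1 (fun h => by simpa using hmem.1.2.2.2 h)
      have hvE : v < E := lt_of_le_of_ne hmem.2.2.1 (fun h => by simpa using hmem.2.2.2.2 h)
      refine ⟨min (B - u) (E - v), by simp [huB, hvE], ?_⟩
      intro α β γ γ' huα hαβ _ hvγ hγγ _ hδβ hδγ
      have hle : μ α β γ γ' ≤ μ A B C E := by
        refine mu_mono hμ hQ ?_ hαβ ?_ ?_ hγγ ?_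
        · exact le_trans hmem.1.1 huα
        · have := min_le_left (B - u) (E - v); linarith
        · exact le_trans hmem.2.1 hvγ
        · have := min_le_right (B - u) (E - v); linarith
      rw [hz] at hle
      exact nonpos_iff_eq_zero.1 hle
    · refine ⟨1, one_pos, ?_⟩
      intro α β γ γ' huα hαβ hβb hvγ hγγ hγd _ _
      exfalso
      apply hd
      refine dptMem_iff.2 ⟨⟨hu1, hu2, fun _ => rfl, ?_⟩, ⟨hv1, hv2, fun _ => rfl, ?_⟩⟩
      · intro h; exfalso; linarith
      · intro h; exfalso; linarith
  obtain ⟨dFF, hdFF, hFF⟩ := quadFF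
  obtain ⟨dFT, hdFT, hFT⟩ := quadFT
  obtain ⟨dTF, hdTF, hTF⟩ := quadTF
  obtain ⟨dTT, hdTT, hTT⟩ := quadTT
  set δ := min (min dFF dFT) (min dTF dTT) with hδdef
  have hδ : 0 < δ := by
    simp only [hδdef, lt_min_iff]
    exact ⟨⟨hdFF, hdFT⟩, ⟨hdTF, hdTT⟩⟩
  have hδ1 : δ ≤ dFF := le_trans (min_le_left _ _) (min_le_left _ _)
  have hδ2 : δ ≤ dFT := le_trans (min_le_left _ _) (min_le_right _ _)
  have hδ3 : δ ≤ dTF := le_trans (min_le_right _ _) (min_le_left _ _)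
  have hδ4 : δ ≤ dTT := le_trans (min_le_right _ _) (min_le_right _ _)
  refine ⟨δ, hδ, ?_⟩
  -- left column : β ≤ u
  have colL : ∀ α β γ γ', a ≤ α → α < β → β ≤ u → c ≤ γ → γ < γ' → γ' ≤ d →
      u - δ ≤ α → v - δ ≤ γ → γ' ≤ v + δ → μ α β γ γ' = 0 := by
    intro α β γ γ' hαa hαβ hβu hγc hγγ hγd hδα hδγ hδγ'
    rcases le_or_gt γ' v with hcase | hcase
    · exact hFF α β γ γ' hαa hαβ hβu hγc hγγ hcase (by linarith) (by linarith)
    rcases le_or_gt v γ with hcase2 | hcase2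
    · exact hFT α β γ γ' hαa hαβ hβu hcase2 hγγ hγd (by linarith) (by linarith)
    · have hRsub : RectIn D α β γ γ' :=
        hR.sub hαa hαβ (le_trans hβu hu2) hγc hγγ hγd
      rw [hμ.2 α β γ v γ' hcase2 hcase hRsub,
        hFF α β γ v hαa hαβ hβu hγc hcase2 le_rfl (by linarith) (by linarith),
        hFT α β v γ' hαa hαβ hβu le_rfl hcase hγd (by linarith) (by linarith)]
      simp
  -- right column : u ≤ α
  have colR : ∀ α β γ γ', a ≤ α → α < β → β ≤ b → c ≤ γ → γ < γ' → γ' ≤ d →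
      u ≤ α → β ≤ u + δ → v - δ ≤ γ → γ' ≤ v + δ → μ α β γ γ' = 0 := by
    intro α β γ γ' hαa hαβ hβb hγc hγγ hγd huα hδβ hδγ hδγ'
    rcases le_or_gt γ' v with hcase | hcase
    · exact hTF α β γ γ' huα hαβ hβb hγc hγγ hcase (by linarith) (by linarith)
    rcases le_or_gt v γ with hcase2 | hcase2
    · exact hTT α β γ γ' huα hαβ hβb hcase2 hγγ hγd (by linarith) (by linarith)
    · have hRsub : RectIn D α β γ γ' := hR.sub hαa hαβ hβb hγc hγγ hγd
      rw [hμ.2 α β γ v γ' hcase2 hcase hRsub,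
        hTF α β γ v huα hαβ hβb hγc hcase2 le_rfl (by linarith) (by linarith),
        hTT α β v γ' huα hαβ hβb le_rfl hcase hγd (by linarith) (by linarith)]
      simp
  intro α β γ γ' hαa hαβ hβb hγc hγγ hγd hδα hδβ hδγ hδγ'
  rcases le_or_gt β u with hcase | hcase
  · exact colL α β γ γ' hαa hαβ hcase hγc hγγ hγd hδα hδγ hδγ'
  rcases le_or_gt u α with hcase2 | hcase2
  · exact colR α β γ γ' hαa hαβ hβb hγc hγγ hγd hcase2 hδβ hδγ hδγ'
  · have hRsub : RectIn D α β γ γ' := hR.sub hαa hαβ hβb hγc hγγ hγd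
    rw [hμ.1 α u β γ γ' hcase2 hcase hRsub,
      colL α u γ γ' hαa hcase2 le_rfl hγc hγγ hγd hδα hδγ hδγ',
      colR u β γ γ' (by linarith) hcase hβb hγc hγγ hγd le_rfl hδβ hδγ hδγ']
    simp

end ZLoc

section Heavy

variable {D : Set (ℝ × ℝ)} {μ : ℝ → ℝ → ℝ → ℝ → ℕ∞}

/-- In a rectangle of nonzero measure there is a decorated point all of whose
surrounding rectangles have nonzero measure. -/
lemma exists_heavy (hμ : IsRMeasure D μ) {a b c d : ℝ} (hR : RectIn D a b c d)
    (hpos : μ a b c d ≠ 0) :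
    ∃ x : DPt, dptMem x a b c d ∧
      ∀ a' b' c' d', RectIn D a' b' c' d' → dptMem x a' b' c' d' → μ a' b' c' d' ≠ 0 := by
  by_contra hcon
  push_neg at hcon
  have H : ∀ x : DPt, dptMem x a b c d →
      ∃ a' b' c' d', RectIn D a' b' c' d' ∧ dptMem x a' b' c' d' ∧ μ a' b' c' d' = 0 := by
    intro x hx
    obtain ⟨a', b', c', d', h1, h2, h3⟩ := hcon x hx
    exact ⟨a', b', c', d', h1, h2, h3⟩
  set r0 : BRect D μ := ⟨a, b, c, d, hR, hpos⟩ with hr0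
  set s : ℕ → BRect D μ := bseq hμ r0 with hs
  have hspec := bseq_spec hμ r0
  have hsize := bseq_size hμ r0
  have monoA : Monotone fun n => (s n).a := monotone_nat_of_le_succ fun n => (hspec n).1
  have antiB : Antitone fun n => (s n).b := antitone_nat_of_succ_le fun n => (hspec n).2.1
  have monoC : Monotone fun n => (s n).c := monotone_nat_of_le_succ fun n => (hspec n).2.2.1
  have antiD : Antitone fun n => (s n).d := antitone_nat_of_succ_le fun n => (hspec n).2.2.2.1
  have habn : ∀ n, (s n).a < (s n).b := fun n => (s n).rect.1
  have hcdn : ∀ n, (s n).c < (s n).d := fun n => (s n).rect.2.1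
  have hAB : ∀ m n, (s m).a ≤ (s n).b := by
    intro m n
    rcases le_total m n with h | h
    · exact le_trans (monoA h) (habn n).le
    · exact le_trans (habn m).le (antiB h)
  have hCD : ∀ m n, (s m).c ≤ (s n).d := by
    intro m n
    rcases le_total m n with h | h
    · exact le_trans (monoC h) (hcdn n).le
    · exact le_trans (hcdn m).le (antiD h)
  have bddA : BddAbove (Set.range fun n => (s n).a) := by
    refine ⟨(s 0).b, ?_⟩
    rintro _ ⟨n, rfl⟩
    exact hAB n 0
  have bddC : BddAbove (Set.range fun n => (s n).c) := by
    refine ⟨(s 0).d, ?_⟩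
    rintro _ ⟨n, rfl⟩
    exact hCD n 0
  set u := ⨆ n, (s n).a with hu
  set v := ⨆ n, (s n).c with hv
  have hau : ∀ n, (s n).a ≤ u := fun n => le_ciSup bddA n
  have hub : ∀ n, u ≤ (s n).b := fun n => ciSup_le fun m => hAB m n
  have hcv : ∀ n, (s n).c ≤ v := fun n => le_ciSup bddC n
  have hvd : ∀ n, v ≤ (s n).d := fun n => ciSup_le fun m => hCD m n
  have hs0a : (s 0).a = a := rfl
  have hs0b : (s 0).b = b := rfl
  have hs0c : (s 0).c = c := rfl
  have hs0d : (s 0).d = d := rfl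
  obtain ⟨δ, hδpos, hδ⟩ := zloc hμ hR H (hs0a ▸ hau 0) (hs0b ▸ hub 0) (hs0c ▸ hcv 0)
    (hs0d ▸ hvd 0)
  -- find n with both sizes < δ
  obtain ⟨n, hn⟩ := pow_unbounded_of_one_lt (max (b - a) (d - c) / δ) (one_lt_two (α := ℝ))
  have h2n : (0 : ℝ) < 2 ^ n := by positivity
  have hM : max (b - a) (d - c) < δ * 2 ^ n := by
    have := (div_lt_iff₀ hδpos).1 hn
    linarith
  have hszx : (s n).b - (s n).a < δ := by
    have h1 := (hsize n).1
    have h2 : (r0.b - r0.a) = b - a := rfl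
    rw [h2] at h1
    have h3 : b - a ≤ max (b - a) (d - c) := le_max_left _ _
    rw [h1, div_lt_iff₀ h2n]
    linarith
  have hszy : (s n).d - (s n).c < δ := by
    have h1 := (hsize n).2
    have h2 : (r0.d - r0.c) = d - c := rfl
    rw [h2] at h1
    have h3 : d - c ≤ max (b - a) (d - c) := le_max_right _ _
    rw [h1, div_lt_iff₀ h2n]
    linarith
  apply (s n).pos
  refine hδ (s n).a (s n).b (s n).c (s n).d ?_ (habn n) ?_ ?_ (hcdn n) ?_ ?_ ?_ ?_ ?_
  · exact hs0a ▸ monoA (Nat.zero_le n)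
  · exact hs0b ▸ antiB (Nat.zero_le n)
  · exact hs0c ▸ monoC (Nat.zero_le n)
  · exact hs0d ▸ antiD (Nat.zero_le n)
  · have := hub n; linarith
  · have := hau n; linarith
  · have := hvd n; linarith
  · have := hcv n; linarith

end Heavy

section MuSub

variable {D : Set (ℝ × ℝ)} {μ : ℝ → ℝ → ℝ → ℝ → ℕ∞}

lemma enat_sub_add {M1 M2 : ℕ∞} (w : ℕ) (h1 : M1 ≠ ⊤) (hw : (w : ℕ∞) ≤ M1) :
    (M1 + M2) - w = (M1 - w) + M2 := by
  rcases eq_or_ne M2 ⊤ with rfl | h2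
  · rw [add_top, add_top, ENat.top_sub_coe]
  · lift M1 to ℕ using h1
    lift M2 to ℕ using h2
    have hwm : w ≤ M1 := by exact_mod_cast hw
    rw [← Nat.cast_add, ← ENat.coe_sub, ← ENat.coe_sub, ← Nat.cast_add]
    congr 1
    omega

lemma enat_add_sub {M1 M2 : ℕ∞} (w : ℕ) (h2 : M2 ≠ ⊤) (hw : (w : ℕ∞) ≤ M2) :
    (M1 + M2) - w = M1 + (M2 - w) := by
  rw [add_comm M1 M2, add_comm M1, enat_sub_add w h2 hw]

/-- `μ` with the minimal multiplicity at `x₀` removed. -/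
noncomputable def muSub (D : Set (ℝ × ℝ)) (μ : ℝ → ℝ → ℝ → ℝ → ℕ∞) (x₀ : DPt) :
    ℝ → ℝ → ℝ → ℝ → ℕ∞ :=
  fun a b c d => μ a b c d - (if dptMem x₀ a b c d then ((mNat D μ x₀ : ℕ) : ℕ∞) else 0)

lemma muSub_of_mem {x₀ : DPt} {a b c d : ℝ} (h : dptMem x₀ a b c d) :
    muSub D μ x₀ a b c d = μ a b c d - (mNat D μ x₀ : ℕ∞) := by
  unfold muSub
  rw [if_pos h]

lemma muSub_of_not_mem {x₀ : DPt} {a b c d : ℝ} (h : ¬ dptMem x₀ a b c d) :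
    muSub D μ x₀ a b c d = μ a b c d := by
  unfold muSub
  rw [if_neg h]
  simp

lemma muSub_isRMeasure (hμ : IsRMeasure D μ)
    (hfin : ∀ a b c d, RectIn D a b c d → μ a b c d ≠ ⊤) (x₀ : DPt) :
    IsRMeasure D (muSub D μ x₀) := by
  constructor
  · intro a p b c d hap hpb hR
    have hsplit := hμ.1 a p b c d hap hpb hR
    have hRL : RectIn D a p c d := hR.sub le_rfl hap hpb.le le_rfl hR.2.1 le_rfl
    have hRR : RectIn D p b c d := hR.sub hap.le hpb le_rfl le_rfl hR.2.1 le_rfl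
    by_cases hd : dptMem x₀ a b c d
    · rcases dpt_halfH hd hap hpb with hL | hL
      · have hnR : ¬ dptMem x₀ p b c d := fun h => dpt_halfH_not hL h
        rw [muSub_of_mem hd, muSub_of_mem hL, muSub_of_not_mem hnR, hsplit]
        exact enat_sub_add _ (hfin _ _ _ _ hRL) (mNat_le hfin hRL hL)
      · have hnL : ¬ dptMem x₀ a p c d := fun h => dpt_halfH_not h hL
        rw [muSub_of_mem hd, muSub_of_mem hL, muSub_of_not_mem hnL, hsplit]
        exact enat_add_sub _ (hfin _ _ _ _ hRR) (mNat_le hfin hRR hL)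
    · have hnL : ¬ dptMem x₀ a p c d := fun h => hd (dpt_mono le_rfl hpb.le le_rfl le_rfl h)
      have hnR : ¬ dptMem x₀ p b c d := fun h => hd (dpt_mono hap.le le_rfl le_rfl le_rfl h)
      rw [muSub_of_not_mem hd, muSub_of_not_mem hnL, muSub_of_not_mem hnR, hsplit]
  · intro a b c q d hcq hqd hR
    have hsplit := hμ.2 a b c q d hcq hqd hR
    have hRL : RectIn D a b c q := hR.sub le_rfl hR.1 le_rfl le_rfl hcq hqd.le
    have hRR : RectIn D a b q d := hR.sub le_rfl hR.1 le_rfl hcq.le hqd le_rfl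
    by_cases hd : dptMem x₀ a b c d
    · rcases dpt_halfV hd hcq hqd with hL | hL
      · have hnR : ¬ dptMem x₀ a b q d := fun h => dpt_halfV_not hL h
        rw [muSub_of_mem hd, muSub_of_mem hL, muSub_of_not_mem hnR, hsplit]
        exact enat_sub_add _ (hfin _ _ _ _ hRL) (mNat_le hfin hRL hL)
      · have hnL : ¬ dptMem x₀ a b c q := fun h => dpt_halfV_not h hL
        rw [muSub_of_mem hd, muSub_of_mem hL, muSub_of_not_mem hnL, hsplit]
        exact enat_add_sub _ (hfin _ _ _ _ hRR) (mNat_le hfin hRR hL)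
    · have hnL : ¬ dptMem x₀ a b c q := fun h => hd (dpt_mono le_rfl le_rfl le_rfl hqd.le h)
      have hnR : ¬ dptMem x₀ a b q d := fun h => hd (dpt_mono le_rfl le_rfl hcq.le le_rfl h)
      rw [muSub_of_not_mem hd, muSub_of_not_mem hnL, muSub_of_not_mem hnR, hsplit]

lemma muSub_fin (hfin : ∀ a b c d, RectIn D a b c d → μ a b c d ≠ ⊤) (x₀ : DPt) :
    ∀ a b c d, RectIn D a b c d → muSub D μ x₀ a b c d ≠ ⊤ := by
  intro a b c d hR
  unfold muSub
  intro h
  exact hfin a b c d hR (eq_top_mono tsub_le_self h)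

lemma muSub_mNat_self (hfin : ∀ a b c d, RectIn D a b c d → μ a b c d ≠ ⊤)
    {x₀ : DPt} (hx₀ : x₀ ∈ rInt D) : mNat D (muSub D μ x₀) x₀ = 0 := by
  obtain ⟨a, b, c, d, hR, hm, hval⟩ := mNat_mem hfin hx₀
  have h0 : (0 : ℕ) ∈ mSet D (muSub D μ x₀) x₀ := by
    refine ⟨a, b, c, d, hR, hm, ?_⟩
    rw [muSub_of_mem hm, hval]
    simp
  exact Nat.eq_zero_of_le_zero (Nat.sInf_le h0)

lemma muSub_mNat_other (hμ : IsRMeasure D μ)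
    (hfin : ∀ a b c d, RectIn D a b c d → μ a b c d ≠ ⊤)
    {x₀ x : DPt} (hx : x ∈ rInt D) (hne : x ≠ x₀) :
    mNat D (muSub D μ x₀) x = mNat D μ x := by
  have hfin' := muSub_fin (μ := μ) hfin x₀
  refine le_antisymm ?_ ?_
  · -- find a rectangle avoiding x₀ realizing the old minimum
    obtain ⟨a, b, c, d, hR, hm, hval⟩ := mNat_mem hfin hx
    by_cases hd : dptMem x₀ a b c d
    · obtain ⟨a1, b1, c1, d1, a2, b2, c2, d2, j1, j2, j3, j4, j5, j6, k1, k2, k3, k4, k5, k6,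
        hm1, hm2, hdisj, hsum⟩ := dpt_sep hne hm hd
      have hR1 : RectIn D a1 b1 c1 d1 := hR.sub j1 j2 j3 j4 j5 j6
      have heq : μ a1 b1 c1 d1 = (mNat D μ x : ℕ∞) := by
        refine le_antisymm ?_ (mNat_le hfin hR1 hm1)
        rw [← hval, hsum D μ hμ hR]
        exact le_self_add
      have hn0 : ¬ dptMem x₀ a1 b1 c1 d1 := fun h => hdisj x₀ h hm2
      have : mNat D μ x ∈ mSet D (muSub D μ x₀) x := by
        refine ⟨a1, b1, c1, d1, hR1, hm1, ?_⟩
        rw [muSub_of_not_mem hn0, heq]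
      exact Nat.sInf_le this
    · have : mNat D μ x ∈ mSet D (muSub D μ x₀) x := by
        refine ⟨a, b, c, d, hR, hm, ?_⟩
        rw [muSub_of_not_mem hd, hval]
      exact Nat.sInf_le this
  · -- the new minimum is at least the old one
    obtain ⟨a, b, c, d, hR, hm, hval⟩ := mNat_mem hfin' hx
    have hge : (mNat D μ x : ℕ∞) ≤ muSub D μ x₀ a b c d := by
      by_cases hd : dptMem x₀ a b c d
      · obtain ⟨a1, b1, c1, d1, a2, b2, c2, d2, j1, j2, j3, j4, j5, j6, k1, k2, k3, k4, k5, k6,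
          hm1, hm2, hdisj, hsum⟩ := dpt_sep hne hm hd
        have hR1 : RectIn D a1 b1 c1 d1 := hR.sub j1 j2 j3 j4 j5 j6
        have hR2 : RectIn D a2 b2 c2 d2 := hR.sub k1 k2 k3 k4 k5 k6
        have h1 : (mNat D μ x : ℕ∞) ≤ μ a1 b1 c1 d1 := mNat_le hfin hR1 hm1
        have h2 : (mNat D μ x₀ : ℕ∞) ≤ μ a2 b2 c2 d2 := mNat_le hfin hR2 hm2
        rw [muSub_of_mem hd, hsum D μ hμ hR]
        calc (mNat D μ x : ℕ∞) = (mNat D μ x : ℕ∞) + (mNat D μ x₀ : ℕ∞) - (mNat D μ x₀ : ℕ∞) := by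
              rw [← Nat.cast_add, ← ENat.coe_sub, Nat.add_sub_cancel]
          _ ≤ (μ a1 b1 c1 d1 + μ a2 b2 c2 d2) - (mNat D μ x₀ : ℕ∞) :=
              tsub_le_tsub_right (add_le_add h1 h2) _
      · rw [muSub_of_not_mem hd]
        exact mNat_le hfin hR hm
    rw [hval] at hge
    exact_mod_cast hge

end MuSub

section Main

lemma main_count (D : Set (ℝ × ℝ)) : ∀ n : ℕ, ∀ μ : ℝ → ℝ → ℝ → ℝ → ℕ∞,
    IsRMeasure D μ → (∀ a b c d, RectIn D a b c d → μ a b c d ≠ ⊤) →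
    ∀ a b c d, RectIn D a b c d → μ a b c d = (n : ℕ∞) →
    dcount (mFun D μ) a b c d = (n : ℕ∞) := by
  intro n
  induction n using Nat.strong_induction_on with
  | _ n IH =>
    intro μ hμ hfin a b c d hR hval
    rcases Nat.eq_zero_or_pos n with rfl | hn
    · -- measure zero : no points of positive multiplicity
      rw [Nat.cast_zero] at hval ⊢
      refine dcount_zero ?_
      intro y hy
      have hyint : y ∈ rInt D := ⟨a, b, c, d, hR, hy⟩
      rw [mFun_eq hyint]
      have h0 : (0 : ℕ) ∈ mSet D μ y := ⟨a, b, c, d, hR, hy, by rw [hval]; simp⟩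
      exact Nat.eq_zero_of_le_zero (Nat.sInf_le h0)
    · -- positive measure : find a heavy point and recurse
      have hpos : μ a b c d ≠ 0 := by
        rw [hval]
        have : n ≠ 0 := hn.ne'
        exact_mod_cast this
      obtain ⟨x₀, hx₀mem, hx₀⟩ := exists_heavy hμ hR hpos
      have hx₀int : x₀ ∈ rInt D := ⟨a, b, c, d, hR, hx₀mem⟩
      set w := mNat D μ x₀ with hw
      have hw0 : w ≠ 0 := by
        intro h
        obtain ⟨a', b', c', d', hR', hm', hval'⟩ := mNat_mem hfin hx₀int
        rw [← hw, h] at hval'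
        exact hx₀ a' b' c' d' hR' hm' (by rw [hval']; simp)
      have hwn : w ≤ n := by
        have := mNat_le hfin hR hx₀mem
        rw [hval] at this
        exact_mod_cast this
      -- apply the induction hypothesis to the reduced measure
      have hμ' := muSub_isRMeasure hμ hfin x₀
      have hfin' := muSub_fin (μ := μ) hfin x₀
      have hval' : muSub D μ x₀ a b c d = ((n - w : ℕ) : ℕ∞) := by
        rw [muSub_of_mem hx₀mem, hval, ← hw, ← ENat.coe_sub]
      have hlt : n - w < n := by omega
      have hIH := IH (n - w) hlt (muSub D μ x₀) hμ' hfin' a b c d hR hval'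
      -- relate the two multiplicity functions
      have hupd : dcount (mFun D μ) a b c d = dcount (mFun D (muSub D μ x₀)) a b c d + w := by
        refine dcount_update hx₀mem ?_ ?_
        · intro x hx
          unfold mFun
          by_cases hxint : x ∈ rInt D
          · rw [if_pos hxint, if_pos hxint, muSub_mNat_other hμ hfin hxint hx]
          · rw [if_neg hxint, if_neg hxint]
        · rw [mFun_eq hx₀int, mFun_eq hx₀int, muSub_mNat_self hfin hx₀int, zero_add, hw]
      rw [hupd, hIH, ← Nat.cast_add]
      congr 1
      omega

end Main

section Unique

variable {D : Set (ℝ × ℝ)} {μ : ℝ → ℝ → ℝ → ℝ → ℕ∞}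

/-- Shrink a rectangle around `x` to avoid a finite set of other decorated points. -/
lemma shrink_avoid {x : DPt} {a b c d : ℝ} (hx : dptMem x a b c d)
    (F : Finset DPt) (hxF : x ∉ F) :
    ∃ a' b' c' d', a ≤ a' ∧ a' < b' ∧ b' ≤ b ∧ c ≤ c' ∧ c' < d' ∧ d' ≤ d ∧
      dptMem x a' b' c' d' ∧ ∀ y ∈ F, ¬ dptMem y a' b' c' d' := by
  classical
  induction F using Finset.induction with
  | empty =>
    rw [dptMem_iff] at hx
    exact ⟨a, b, c, d, le_rfl, pm_lt hx.1, le_rfl, le_rfl, pm_lt hx.2, le_rfl,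
      dptMem_iff.2 hx, fun y hy => absurd hy (Finset.notMem_empty y)⟩
  | @insert y F hyF ih =>
    have hxy : x ≠ y := fun h => hxF (h ▸ Finset.mem_insert_self y F)
    obtain ⟨a', b', c', d', j1, j2, j3, j4, j5, j6, hm, havoid⟩ :=
      ih (fun h => hxF (Finset.mem_insert_of_mem h))
    by_cases hy : dptMem y a' b' c' d'
    · obtain ⟨a1, b1, c1, d1, a2, b2, c2, d2, k1, k2, k3, k4, k5, k6, l1, l2, l3, l4, l5, l6,
        hm1, hm2, hdisj, -⟩ := dpt_sep hxy hm hy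
      refine ⟨a1, b1, c1, d1, le_trans j1 k1, k2, le_trans k3 j3, le_trans j4 k4, k5,
        le_trans k6 j6, hm1, ?_⟩
      intro z hz
      rcases Finset.mem_insert.1 hz with rfl | hz'
      · exact fun h => hdisj z h hm2
      · exact fun h => havoid z hz' (dpt_mono k1 k3 k4 k6 h)
    · refine ⟨a', b', c', d', j1, j2, j3, j4, j5, j6, hm, ?_⟩
      intro z hz
      rcases Finset.mem_insert.1 hz with rfl | hz'
      · exact hy
      · exact havoid z hz'

/-- Uniqueness of the multiplicity function. -/
lemma mult_unique (hμ : IsRMeasure D μ)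
    (hfin : ∀ a b c d, RectIn D a b c d → μ a b c d ≠ ⊤)
    (m' : DPt → ℕ) (h0 : ∀ x, x ∉ rInt D → m' x = 0)
    (hcount : ∀ a b c d, RectIn D a b c d → μ a b c d = dcount m' a b c d) :
    m' = mFun D μ := by
  classical
  funext x
  by_cases hx : x ∈ rInt D
  · rw [mFun_eq hx]
    obtain ⟨a, b, c, d, hR, hm⟩ := hx
    refine le_antisymm ?_ ?_
    · -- m' x ≤ mNat via the minimising rectangle
      obtain ⟨a', b', c', d', hR', hm', hval'⟩ := mNat_mem hfin ⟨a, b, c, d, hR, hm⟩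
      have h1 : (m' x : ℕ∞) ≤ dcount m' a' b' c' d' := dcount_point_le hm'
      rw [← hcount a' b' c' d' hR', hval'] at h1
      exact_mod_cast h1
    · -- mNat ≤ m' x via a small rectangle containing only x
      have hfinR : dcount m' a b c d ≠ ⊤ := by
        rw [← hcount a b c d hR]
        exact hfin a b c d hR
      have hSfin : {y : DPt | dptMem y a b c d ∧ m' y ≠ 0}.Finite :=
        dcount_support_finite hfinR
      set S := {y : DPt | (dptMem y a b c d ∧ m' y ≠ 0) ∧ y ≠ x} with hS
      have hSfin' : S.Finite := hSfin.subset (fun y hy => hy.1)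
      have hxS : x ∉ hSfin'.toFinset := by
        simp [hS]
      obtain ⟨a', b', c', d', j1, j2, j3, j4, j5, j6, hm', havoid⟩ :=
        shrink_avoid hm hSfin'.toFinset hxS
      have hR' : RectIn D a' b' c' d' := hR.sub j1 j2 j3 j4 j5 j6
      have hzero : ∀ y, dptMem y a' b' c' d' → y ≠ x → m' y = 0 := by
        intro y hy hyx
        by_contra hm0
        exact havoid y (hSfin'.mem_toFinset.2 ⟨⟨dpt_mono j1 j3 j4 j6 hy, hm0⟩, hyx⟩) hy
      have hsingle : dcount m' a' b' c' d' = (m' x : ℕ∞) := dcount_single hm' hzero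
      have : (mNat D μ x : ℕ∞) ≤ (m' x : ℕ∞) := by
        rw [← hsingle, ← hcount a' b' c' d' hR']
        exact mNat_le hfin hR' hm'
      exact_mod_cast this
  · rw [h0 x hx]
    unfold mFun
    rw [if_neg hx]

end Unique

theorem stmt9 (D : Set (ℝ × ℝ)) (μ : ℝ → ℝ → ℝ → ℝ → ℕ∞)
    (hμ : IsRMeasure D μ) (hfin : ∀ a b c d, RectIn D a b c d → μ a b c d ≠ ⊤) :
    (∃ m : (ℝ × Bool) × (ℝ × Bool) → ℕ,
      ((∀ x, x ∉ rInt D → m x = 0) ∧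
       (∀ a b c d, RectIn D a b c d → μ a b c d = dcount m a b c d) ∧
       (∀ a b c d, RectIn D a b c d → dcount m a b c d ≠ ⊤)) ∧
      (∀ m' : (ℝ × Bool) × (ℝ × Bool) → ℕ,
        (∀ x, x ∉ rInt D → m' x = 0) →
        (∀ a b c d, RectIn D a b c d → μ a b c d = dcount m' a b c d) → m' = m)) ∧
    (∀ m : (ℝ × Bool) × (ℝ × Bool) → ℕ,
      (∀ x, x ∉ rInt D → m x = 0) →
      (∀ a b c d, RectIn D a b c d → dcount m a b c d ≠ ⊤) →
      IsRMeasure D (fun a b c d => dcount m a b c d)) := by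
  constructor
  · refine ⟨mFun D μ, ⟨?_, ?_, ?_⟩, ?_⟩
    · intro x hx
      unfold mFun
      rw [if_neg hx]
    · intro a b c d hR
      have := main_count D (μ a b c d).toNat μ hμ hfin a b c d hR
        (ENat.coe_toNat (hfin a b c d hR)).symm
      rw [this, ENat.coe_toNat (hfin a b c d hR)]
    · intro a b c d hR
      have := main_count D (μ a b c d).toNat μ hμ hfin a b c d hR
        (ENat.coe_toNat (hfin a b c d hR)).symm
      rw [this]
      exact ENat.coe_ne_top _
    · intro m' h0 hcount
      exact mult_unique hμ hfin m' h0 hcount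
  · intro m _ _
    exact dcount_additive D m
end

section
/- Interpolation lemma: suppose U and V are δ-interleaved persistence modules over ℝ (δ ≥ 0). Then there exists a one-parameter family (U_x)_{x ∈ [0,δ]} of persistence modules over ℝ such that U_0 is isomorphic to U, U_δ is isomorphic to V, and U_x and U_y are |y−x|-interleaved for all x, y ∈ [0,δ]. -/
attribute [local instance] Classical.propDecidable

open scoped ENNReal

/-!
Let `φ`, `ψ` be the interleaving maps. For offsets `a, b` with `|a - b| ≤ δ`, let
`W^{a,b}_t ⊆ U_{t+a} × V_{t+b}` consist of the pairs `(u, v)` that the interleaving identifies: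
`φ u` is the image of `v` in `V_{t+a+δ}` and `ψ v` is the image of `u` in `U_{t+b+δ}`. By
naturality of `φ` and `ψ` the structure maps of `U × V` preserve these pairs, and the same maps,
taken between different offsets, `ε`-interleave `W^{a,b}` and `W^{a',b'}` whenever each offset
moves by at most `ε`. Since `ψ ∘ φ` is a structure map of `U`, `u ↦ (u, φ u)` identifies `U`
with `W^{0,δ}`; symmetrically `V ≅ W^{δ,0}`. The family is `x ↦ W^{x, δ-x}`, clamped to `[0, δ]`.
-/

namespace PersMod

variable {k : Type} [Field k] {T : Type} [Preorder T] (W : PersMod k T)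

@[simp]
lemma map_map {r s t : T} (h₁ : r ≤ s) (h₂ : s ≤ t) (x : W.space r) :
    W.map s t h₂ (W.map r s h₁ x) = W.map r t (h₁.trans h₂) x :=
  LinearMap.congr_fun (W.map_comp r s t h₁ h₂) x

@[simp]
lemma map_self (t : T) (h : t ≤ t) (x : W.space t) : W.map t t h x = x :=
  LinearMap.congr_fun (W.map_id t) x

end PersMod

lemma PersIso.trans {k : Type} [Field k] {T : Type} [Preorder T] {U V W : PersMod k T}
    (h₁ : PersIso U V) (h₂ : PersIso V W) : PersIso U W := by
  obtain ⟨e, he⟩ := h₁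
  obtain ⟨f, hf⟩ := h₂
  refine ⟨fun t => (e t).trans (f t), fun s t h => ?_⟩
  rw [LinearEquiv.coe_trans, LinearEquiv.coe_trans, LinearMap.comp_assoc, he,
    ← LinearMap.comp_assoc, hf, LinearMap.comp_assoc]

def IsHomOfDegree {k : Type} [Field k] {U V : PersMod k ℝ} (δ : ℝ)
    (φ : ∀ t, U.space t →ₗ[k] V.space (t + δ)) : Prop :=
  ∀ s t (h : s ≤ t),
    (φ t).comp (U.map s t h) = (V.map (s + δ) (t + δ) (by linarith)).comp (φ s)

lemma IsHomOfDegree.map_apply {k : Type} [Field k] {U V : PersMod k ℝ} {δ : ℝ}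
    {φ : ∀ t, U.space t →ₗ[k] V.space (t + δ)} (hφ : IsHomOfDegree δ φ) {s t : ℝ} (h : s ≤ t)
    (u : U.space s) : φ t (U.map s t h u) = V.map (s + δ) (t + δ) (by linarith) (φ s u) :=
  LinearMap.congr_fun (hφ s t h) u

section Interpolation

variable {k : Type} [Field k] {U V : PersMod k ℝ} {δ : ℝ}
  (φ : ∀ t, U.space t →ₗ[k] V.space (t + δ)) (ψ : ∀ t, V.space t →ₗ[k] U.space (t + δ))

def compatPairs (a b : ℝ) (hab : b ≤ a + δ) (hba : a ≤ b + δ) (t : ℝ) :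
    Submodule k (U.space (t + a) × V.space (t + b)) :=
  LinearMap.eqLocus ((φ (t + a)).comp (LinearMap.fst k _ _))
      ((V.map (t + b) (t + a + δ) (by linarith)).comp (LinearMap.snd k _ _)) ⊓
    LinearMap.eqLocus ((ψ (t + b)).comp (LinearMap.snd k _ _))
      ((U.map (t + a) (t + b + δ) (by linarith)).comp (LinearMap.fst k _ _))

variable {φ ψ}

lemma mem_compatPairs {a b : ℝ} {hab : b ≤ a + δ} {hba : a ≤ b + δ} {t : ℝ}
    {p : U.space (t + a) × V.space (t + b)} :
    p ∈ compatPairs φ ψ a b hab hba t ↔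
      φ (t + a) p.1 = V.map (t + b) (t + a + δ) (by linarith) p.2 ∧
        ψ (t + b) p.2 = U.map (t + a) (t + b + δ) (by linarith) p.1 :=
  Iff.rfl

variable (hφ : IsHomOfDegree δ φ) (hψ : IsHomOfDegree δ ψ)

def compatPairsMap {a b a' b' : ℝ} {hab : b ≤ a + δ} {hba : a ≤ b + δ}
    {hab' : b' ≤ a' + δ} {hba' : a' ≤ b' + δ} {s t : ℝ} (ha : s + a ≤ t + a')
    (hb : s + b ≤ t + b') :
    compatPairs φ ψ a b hab hba s →ₗ[k] compatPairs φ ψ a' b' hab' hba' t :=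
  ((U.map _ _ ha).prodMap (V.map _ _ hb)).restrict fun p hp => by
    rw [mem_compatPairs] at hp ⊢
    refine ⟨?_, ?_⟩
    · rw [LinearMap.prodMap_apply, hφ.map_apply, hp.1, PersMod.map_map, PersMod.map_map]
    · rw [LinearMap.prodMap_apply, hψ.map_apply, hp.2, PersMod.map_map, PersMod.map_map]

@[simp]
lemma coe_compatPairsMap_apply {a b a' b' : ℝ} {hab : b ≤ a + δ} {hba : a ≤ b + δ}
    {hab' : b' ≤ a' + δ} {hba' : a' ≤ b' + δ} {s t : ℝ} (ha : s + a ≤ t + a')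
    (hb : s + b ≤ t + b') (p : compatPairs φ ψ a b hab hba s) :
    (compatPairsMap (hab' := hab') (hba' := hba') hφ hψ ha hb p : U.space _ × V.space _) =
      (U.map _ _ ha p.1.1, V.map _ _ hb p.1.2) :=
  rfl

lemma compatPairsMap_comp {a b a' b' a'' b'' : ℝ} {hab : b ≤ a + δ} {hba : a ≤ b + δ}
    {hab' : b' ≤ a' + δ} {hba' : a' ≤ b' + δ} {hab'' : b'' ≤ a'' + δ} {hba'' : a'' ≤ b'' + δ}
    {r s t : ℝ} (ha : r + a ≤ s + a') (hb : r + b ≤ s + b') (ha' : s + a' ≤ t + a'')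
    (hb' : s + b' ≤ t + b'') (ha'' : r + a ≤ t + a'') (hb'' : r + b ≤ t + b'') :
    (compatPairsMap (hab := hab') (hba := hba') (hab' := hab'') (hba' := hba'') hφ hψ ha' hb').comp
        (compatPairsMap (hab := hab) (hba := hba) hφ hψ ha hb) =
      compatPairsMap hφ hψ ha'' hb'' := by
  ext p <;> simp

lemma compatPairsMap_self {a b : ℝ} {hab : b ≤ a + δ} {hba : a ≤ b + δ} {t : ℝ}
    (ha : t + a ≤ t + a) (hb : t + b ≤ t + b) :
    compatPairsMap (hab := hab) (hba := hba) hφ hψ ha hb = LinearMap.id := by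
  ext p <;> simp

noncomputable def interpolant (a b : ℝ) (hab : b ≤ a + δ) (hba : a ≤ b + δ) : PersMod k ℝ where
  space t := compatPairs φ ψ a b hab hba t
  map _ _ h := compatPairsMap hφ hψ (by linarith) (by linarith)
  map_id _ := compatPairsMap_self hφ hψ _ _
  map_comp _ _ _ _ _ := compatPairsMap_comp hφ hψ _ _ _ _ _ _

lemma interleaved_interpolant {a b a' b' ε : ℝ} {hab : b ≤ a + δ} {hba : a ≤ b + δ}
    {hab' : b' ≤ a' + δ} {hba' : a' ≤ b' + δ} (ha : a ≤ a' + ε) (ha' : a' ≤ a + ε)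
    (hb : b ≤ b' + ε) (hb' : b' ≤ b + ε) :
    Interleaved k (interpolant hφ hψ a b hab hba) (interpolant hφ hψ a' b' hab' hba') ε :=
  ⟨fun _ => compatPairsMap hφ hψ (by linarith) (by linarith),
    fun _ => compatPairsMap hφ hψ (by linarith) (by linarith),
    fun _ _ _ => (compatPairsMap_comp hφ hψ _ _ _ _ _ _).trans
      (compatPairsMap_comp hφ hψ _ _ _ _ (by linarith) (by linarith)).symm,
    fun _ _ _ => (compatPairsMap_comp hφ hψ _ _ _ _ _ _).trans
      (compatPairsMap_comp hφ hψ _ _ _ _ (by linarith) (by linarith)).symm,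
    fun _ _ => compatPairsMap_comp hφ hψ _ _ _ _ _ _,
    fun _ _ => compatPairsMap_comp hφ hψ _ _ _ _ _ _⟩

lemma persIso_interpolant_swap (a b : ℝ) (hab : b ≤ a + δ) (hba : a ≤ b + δ) :
    PersIso (interpolant hφ hψ a b hab hba) (interpolant hψ hφ b a hba hab) := by
  refine ⟨fun t => (LinearEquiv.prodComm k _ _).ofSubmodules _ _ ?_, fun s t h => rfl⟩
  ext ⟨v, u⟩
  simp only [Submodule.mem_map_equiv, mem_compatPairs]
  exact and_comm

noncomputable def compatPairsZeroEquiv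
    (hψφ : ∀ t (h : t ≤ t + δ + δ), (ψ (t + δ)).comp (φ t) = U.map t (t + δ + δ) h)
    {hab : δ ≤ 0 + δ} {hba : 0 ≤ δ + δ} (t : ℝ) :
    compatPairs φ ψ 0 δ hab hba t ≃ₗ[k] U.space t :=
  LinearEquiv.ofLinearMap
    ((U.map (t + 0) t (by simp)).comp ((LinearMap.fst k _ _).comp (Submodule.subtype _)))
    (LinearMap.codRestrict _ ((U.map t (t + 0) (by simp)).prod (φ t)) fun u =>
      mem_compatPairs.2 ⟨hφ.map_apply _ u,
        (LinearMap.congr_fun (hψφ t (by linarith)) u).trans (U.map_map _ _ u).symm⟩)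
    (by ext u; simp)
    (by
      ext ⟨⟨u, v⟩, hp⟩
      · simp
      · simp [hφ.map_apply, (mem_compatPairs.1 hp).1])

lemma persIso_interpolant_zero
    (hψφ : ∀ t (h : t ≤ t + δ + δ), (ψ (t + δ)).comp (φ t) = U.map t (t + δ + δ) h)
    {a b : ℝ} {hab : b ≤ a + δ} {hba : a ≤ b + δ} (ha : a = 0) (hb : b = δ) :
    PersIso (interpolant hφ hψ a b hab hba) U := by
  subst a b
  refine ⟨compatPairsZeroEquiv hφ hψφ, fun s t h => LinearMap.ext fun p => ?_⟩
  change U.map (t + 0) t _ (U.map (s + 0) (t + 0) _ p.1.1) = U.map s t h (U.map (s + 0) s _ p.1.1)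
  simp

end Interpolation

theorem stmt10 {k : Type} [Field k] (U V : PersMod k ℝ) (δ : ℝ) (hδ : 0 ≤ δ)
    (hI : Interleaved k U V δ) :
    ∃ F : ℝ → PersMod k ℝ, PersIso (F 0) U ∧ PersIso (F δ) V ∧
      ∀ x y, x ∈ Set.Icc 0 δ → y ∈ Set.Icc 0 δ → Interleaved k (F x) (F y) |y - x| := by
  obtain ⟨φ, ψ, hφ, hψ, hψφ, hφψ⟩ := hI
  set c : ℝ → ℝ := fun z => Set.projIcc 0 δ hδ z with hc
  have hc_mem (z : ℝ) : c z ∈ Set.Icc 0 δ := (Set.projIcc 0 δ hδ z).2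
  refine ⟨fun z => interpolant hφ hψ (c z) (δ - c z) (by linarith [(hc_mem z).1])
    (by linarith [(hc_mem z).2]), ?_, ?_, fun x y hx hy => ?_⟩
  · exact persIso_interpolant_zero hφ hψ hψφ (by simp [hc]) (by simp [hc])
  · exact (persIso_interpolant_swap hφ hψ _ _ _ _).trans
      (persIso_interpolant_zero hψ hφ hφψ (by simp [hc]) (by simp [hc]))
  · have hcx : c x = x := by simp [hc, Set.projIcc_of_mem hδ hx]
    have hcy : c y = y := by simp [hc, Set.projIcc_of_mem hδ hy]
    have := le_abs_self (y - x)
    have := neg_abs_le (y - x)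
    exact interleaved_interpolant hφ hψ (by linarith) (by linarith) (by linarith) (by linarith)
end

section
/- Interleaving of interval modules: let J and K be intervals of ℝ, and let p = inf J, q = sup J, r = inf K, s = sup K in the extended reals. Then d_i(I^J, I^K) ≤ max(|p−r|, |q−s|), where differences of extended reals are interpreted with |x−y| = 0 if x = y = ±∞ and |x−y| = ∞ if exactly one of x, y is infinite. Equivalently, for every δ > max(|p−r|, |q−s|) the modules I^J and I^K are δ-interleaved. -/
attribute [local instance] Classical.propDecidable

open scoped ENNReal

section Aux12

noncomputable def cm12 (k : Type) [Field k] (P Q : Prop) : (PLift P → k) →ₗ[k] (PLift Q → k) where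
  toFun f _ := if h : P then f ⟨h⟩ else 0
  map_add' f g := by funext hq; by_cases h : P <;> simp [h]
  map_smul' c f := by funext hq; by_cases h : P <;> simp [h]

lemma cm12_comp_eq {k : Type} [Field k] {P Q R : Prop} (h : R → P → Q) :
    (cm12 k Q R).comp (cm12 k P Q) = cm12 k P R := by
  refine LinearMap.ext fun f => funext fun hr => ?_
  show (if hq : Q then (if hp : P then f ⟨hp⟩ else 0) else 0) = (if hp : P then f ⟨hp⟩ else 0)
  by_cases hp : P
  · simp [hp, h hr.down hp]
  · simp [hp]

lemma eDiff_comm12 (x y : EReal) : eDiff x y = eDiff y x := by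
  unfold eDiff
  rcases eq_or_ne x y with rfl | hxy
  · simp
  · rw [if_neg hxy, if_neg (Ne.symm hxy)]
    by_cases h : x = ⊤ ∨ x = ⊥ ∨ y = ⊤ ∨ y = ⊥
    · rw [if_pos h, if_pos (by tauto)]
    · rw [if_neg h, if_neg (by tauto), abs_sub_comm]

lemma of_eDiff_lt12 {x y : EReal} {δ : ℝ} (h : eDiff x y < ENNReal.ofReal δ) :
    0 < δ ∧ (x = y ∨ (x ≠ ⊤ ∧ x ≠ ⊥ ∧ y ≠ ⊤ ∧ y ≠ ⊥ ∧ |x.toReal - y.toReal| < δ)) := by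
  have hδ : 0 < δ := by
    by_contra hc
    rw [ENNReal.ofReal_eq_zero.mpr (le_of_not_gt hc)] at h
    exact (not_lt_bot h)
  refine ⟨hδ, ?_⟩
  unfold eDiff at h
  split_ifs at h with h1 h2
  · left; exact h1
  · exact absurd h not_top_lt
  · right
    push_neg at h2
    exact ⟨h2.1, h2.2.1, h2.2.2.1, h2.2.2.2,
      by rwa [ENNReal.ofReal_lt_ofReal_iff hδ] at h⟩

lemma key_inf12 {A B : Set ℝ} {δ x : ℝ} (hx : x ∈ A)
    (hd : eDiff (sInf (Real.toEReal '' A)) (sInf (Real.toEReal '' B)) < ENNReal.ofReal δ) :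
    sInf (Real.toEReal '' B) < ((x + δ : ℝ) : EReal) := by
  obtain ⟨hδ, hcase⟩ := of_eDiff_lt12 hd
  have hpx : sInf (Real.toEReal '' A) ≤ ((x : ℝ) : EReal) := sInf_le ⟨x, hx, rfl⟩
  rcases hcase with heq | ⟨hpt, hpb, hrt, hrb, habs⟩
  · calc sInf (Real.toEReal '' B) = sInf (Real.toEReal '' A) := heq.symm
      _ ≤ ((x : ℝ) : EReal) := hpx
      _ < ((x + δ : ℝ) : EReal) := by exact_mod_cast (by linarith : x < x + δ)
  · set p := sInf (Real.toEReal '' A) with hpdef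
    set r := sInf (Real.toEReal '' B) with hrdef
    have hp : p = (p.toReal : EReal) := (EReal.coe_toReal hpt hpb).symm
    have hr : r = (r.toReal : EReal) := (EReal.coe_toReal hrt hrb).symm
    have hpx' : p.toReal ≤ x := by rw [hp] at hpx; exact_mod_cast hpx
    have habs' := abs_lt.mp habs
    have : r.toReal < x + δ := by linarith [habs'.1]
    rw [hr]; exact_mod_cast this

lemma key_sup12 {A B : Set ℝ} {δ x : ℝ} (hx : x ∈ A)
    (hd : eDiff (sSup (Real.toEReal '' A)) (sSup (Real.toEReal '' B)) < ENNReal.ofReal δ) :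
    ((x - δ : ℝ) : EReal) < sSup (Real.toEReal '' B) := by
  obtain ⟨hδ, hcase⟩ := of_eDiff_lt12 hd
  have hqx : ((x : ℝ) : EReal) ≤ sSup (Real.toEReal '' A) := le_sSup ⟨x, hx, rfl⟩
  rcases hcase with heq | ⟨hqt, hqb, hst, hsb, habs⟩
  · calc ((x - δ : ℝ) : EReal) < ((x : ℝ) : EReal) := by
          exact_mod_cast (by linarith : x - δ < x)
      _ ≤ sSup (Real.toEReal '' A) := hqx
      _ = sSup (Real.toEReal '' B) := heq
  · set q := sSup (Real.toEReal '' A) with hqdef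
    set s := sSup (Real.toEReal '' B) with hsdef
    have hq : q = (q.toReal : EReal) := (EReal.coe_toReal hqt hqb).symm
    have hs : s = (s.toReal : EReal) := (EReal.coe_toReal hst hsb).symm
    have hqx' : x ≤ q.toReal := by rw [hq] at hqx; exact_mod_cast hqx
    have habs' := abs_lt.mp habs
    have : x - δ < s.toReal := by linarith [habs'.2]
    rw [hs]; exact_mod_cast this

lemma mem_of_inf_lt12 {K : Set ℝ} (hK : IsIntervalSet K) {c u : ℝ} (hu : u ∈ K)
    (h1 : sInf (Real.toEReal '' K) < ((c : ℝ) : EReal)) (h2 : c ≤ u) : c ∈ K := by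
  obtain ⟨a, ⟨w, hw, rfl⟩, hlt⟩ := sInf_lt_iff.mp h1
  have hwc : w ≤ c := by exact_mod_cast hlt.le
  exact hK.2 hw hu hwc h2

lemma mem_of_lt_sup12 {K : Set ℝ} (hK : IsIntervalSet K) {c u : ℝ} (hu : u ∈ K)
    (h2 : u ≤ c) (h1 : ((c : ℝ) : EReal) < sSup (Real.toEReal '' K)) : c ∈ K := by
  obtain ⟨a, ⟨w, hw, rfl⟩, hlt⟩ := lt_sSup_iff.mp h1
  have hcw : c ≤ w := by exact_mod_cast hlt.le
  exact hK.2 hu hw h2 hcw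

lemma mem_of_between12 {K : Set ℝ} (hK : IsIntervalSet K) {c : ℝ}
    (h1 : sInf (Real.toEReal '' K) < ((c : ℝ) : EReal))
    (h2 : ((c : ℝ) : EReal) < sSup (Real.toEReal '' K)) : c ∈ K := by
  obtain ⟨a, ⟨w, hw, rfl⟩, hlt⟩ := sInf_lt_iff.mp h1
  exact mem_of_lt_sup12 hK hw (by exact_mod_cast hlt.le) h2

end Aux12

theorem stmt12 {k : Type} [Field k] (J K : Set ℝ)
    (hJ : IsIntervalSet J) (hK : IsIntervalSet K) :
    dInter k (intervalModule k ℝ J hJ) (intervalModule k ℝ K hK) ≤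
      max (eDiff (sInf (Real.toEReal '' J)) (sInf (Real.toEReal '' K)))
          (eDiff (sSup (Real.toEReal '' J)) (sSup (Real.toEReal '' K))) ∧
    ∀ δ : ℝ,
      max (eDiff (sInf (Real.toEReal '' J)) (sInf (Real.toEReal '' K)))
          (eDiff (sSup (Real.toEReal '' J)) (sSup (Real.toEReal '' K))) < ENNReal.ofReal δ →
      Interleaved k (intervalModule k ℝ J hJ) (intervalModule k ℝ K hK) δ := by
  have key : ∀ δ : ℝ,
      max (eDiff (sInf (Real.toEReal '' J)) (sInf (Real.toEReal '' K)))
          (eDiff (sSup (Real.toEReal '' J)) (sSup (Real.toEReal '' K))) < ENNReal.ofReal δ →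
      Interleaved k (intervalModule k ℝ J hJ) (intervalModule k ℝ K hK) δ := by
    intro δ hδ
    have hd1 : eDiff (sInf (Real.toEReal '' J)) (sInf (Real.toEReal '' K)) < ENNReal.ofReal δ :=
      lt_of_le_of_lt (le_max_left _ _) hδ
    have hd2 : eDiff (sSup (Real.toEReal '' J)) (sSup (Real.toEReal '' K)) < ENNReal.ofReal δ :=
      lt_of_le_of_lt (le_max_right _ _) hδ
    have hd1' : eDiff (sInf (Real.toEReal '' K)) (sInf (Real.toEReal '' J)) < ENNReal.ofReal δ :=
      by rwa [eDiff_comm12]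
    have hd2' : eDiff (sSup (Real.toEReal '' K)) (sSup (Real.toEReal '' J)) < ENNReal.ofReal δ :=
      by rwa [eDiff_comm12]
    -- claims
    have hA : ∀ s t : ℝ, s ≤ t → s ∈ J → t + δ ∈ K → t ∈ J := by
      intro s t hst hs ht
      have h := key_sup12 ht hd2'
      rw [show t + δ - δ = t by ring] at h
      exact mem_of_lt_sup12 hJ hs hst h
    have hB : ∀ s t : ℝ, s ≤ t → s ∈ J → t + δ ∈ K → s + δ ∈ K := by
      intro s t hst hs ht
      exact mem_of_inf_lt12 hK ht (key_inf12 hs hd1) (by linarith)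
    have hA' : ∀ s t : ℝ, s ≤ t → s ∈ K → t + δ ∈ J → t ∈ K := by
      intro s t hst hs ht
      have h := key_sup12 ht hd2
      rw [show t + δ - δ = t by ring] at h
      exact mem_of_lt_sup12 hK hs hst h
    have hB' : ∀ s t : ℝ, s ≤ t → s ∈ K → t + δ ∈ J → s + δ ∈ J := by
      intro s t hst hs ht
      exact mem_of_inf_lt12 hJ ht (key_inf12 hs hd1') (by linarith)
    have hC : ∀ t : ℝ, t ∈ J → t + δ + δ ∈ J → t + δ ∈ K := by
      intro t ht ht2
      have h2 := key_sup12 ht2 hd2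
      rw [show t + δ + δ - δ = t + δ by ring] at h2
      exact mem_of_between12 hK (key_inf12 ht hd1) h2
    have hC' : ∀ t : ℝ, t ∈ K → t + δ + δ ∈ K → t + δ ∈ J := by
      intro t ht ht2
      have h2 := key_sup12 ht2 hd2'
      rw [show t + δ + δ - δ = t + δ by ring] at h2
      exact mem_of_between12 hJ (key_inf12 ht hd1') h2
    refine ⟨fun t => cm12 k (t ∈ J) (t + δ ∈ K), fun t => cm12 k (t ∈ K) (t + δ ∈ J),
      ?_, ?_, ?_, ?_⟩
    · intro s t h
      show (cm12 k (t ∈ J) (t + δ ∈ K)).comp (cm12 k (s ∈ J) (t ∈ J))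
        = (cm12 k (s + δ ∈ K) (t + δ ∈ K)).comp (cm12 k (s ∈ J) (s + δ ∈ K))
      rw [cm12_comp_eq (fun hr hp => hA s t h hp hr),
        cm12_comp_eq (fun hr hp => hB s t h hp hr)]
    · intro s t h
      show (cm12 k (t ∈ K) (t + δ ∈ J)).comp (cm12 k (s ∈ K) (t ∈ K))
        = (cm12 k (s + δ ∈ J) (t + δ ∈ J)).comp (cm12 k (s ∈ K) (s + δ ∈ J))
      rw [cm12_comp_eq (fun hr hp => hA' s t h hp hr),
        cm12_comp_eq (fun hr hp => hB' s t h hp hr)]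
    · intro t h
      show (cm12 k (t + δ ∈ K) (t + δ + δ ∈ J)).comp (cm12 k (t ∈ J) (t + δ ∈ K))
        = cm12 k (t ∈ J) (t + δ + δ ∈ J)
      exact cm12_comp_eq (fun hr hp => hC t hp hr)
    · intro t h
      show (cm12 k (t + δ ∈ J) (t + δ + δ ∈ K)).comp (cm12 k (t ∈ K) (t + δ ∈ J))
        = cm12 k (t ∈ K) (t + δ + δ ∈ K)
      exact cm12_comp_eq (fun hr hp => hC' t hp hr)
  refine ⟨?_, key⟩
  refine le_of_forall_gt_imp_ge_of_dense fun c hc => ?_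
  obtain ⟨e, h1, h2⟩ := exists_between hc
  have he : e ≠ ⊤ := h2.ne_top
  have heq : ENNReal.ofReal e.toReal = e := ENNReal.ofReal_toReal he
  have hI := key e.toReal (by rwa [heq])
  refine le_trans (sInf_le ?_) (heq ▸ h2.le)
  exact ⟨e.toReal, ENNReal.toReal_nonneg, hI, rfl⟩
end

section
/- Interleaving distance to the zero module: let J be an interval of ℝ with p = inf J and q = sup J in the extended reals, and let 0 denote the zero persistence module. Then d_i(I^J, 0) = (q − p)/2, interpreted as ∞ when J is unbounded. -/
attribute [local instance] Classical.propDecidable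

open scoped ENNReal

/-! An interleaving of `I^J` with the zero module of size `δ` makes the structure map
`I^J_t → I^J_{t+2δ}` factor through `0`, so `δ`-interleavings exist exactly when no `t` and `t + 2δ`
lie in `J` together. For an interval of `ℝ` this holds as soon as `2δ` exceeds the diameter of `J`
and fails as soon as `2δ` is smaller, so the infimum of such `δ` is `diam J / 2`. -/

open Metric

theorem EReal.sSup_coe_image_of_not_bddAbove {s : Set ℝ} (hs : ¬BddAbove s) :
    sSup (Real.toEReal '' s) = ⊤ := by
  refine sSup_eq_top.2 fun b hb => ?_
  obtain ⟨x, hx, hbx⟩ := not_bddAbove_iff.1 hs b.toReal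
  exact ⟨x, Set.mem_image_of_mem _ hx,
    (le_coe_toReal hb.ne).trans_lt (EReal.coe_lt_coe_iff.2 hbx)⟩

theorem EReal.sInf_coe_image_of_not_bddBelow {s : Set ℝ} (hs : ¬BddBelow s) :
    sInf (Real.toEReal '' s) = ⊥ := by
  refine sInf_eq_bot.2 fun b hb => ?_
  obtain ⟨x, hx, hbx⟩ := not_bddBelow_iff.1 hs b.toReal
  exact ⟨x, Set.mem_image_of_mem _ hx,
    (EReal.coe_lt_coe_iff.2 hbx).trans_le (coe_toReal_le hb.ne')⟩

theorem Real.ediam_eq_ite {s : Set ℝ} (hne : s.Nonempty) :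
    ediam s = if sInf (Real.toEReal '' s) = ⊥ ∨ sSup (Real.toEReal '' s) = ⊤ then ⊤
      else ENNReal.ofReal
        ((sSup (Real.toEReal '' s)).toReal - (sInf (Real.toEReal '' s)).toReal) := by
  by_cases hs : Bornology.IsBounded s
  · have hmono := EReal.coe_strictMono.monotone
    have hcont {x : ℝ} : ContinuousAt Real.toEReal x := continuous_coe_real_ereal.continuousAt
    rw [← hmono.map_csSup_of_continuousAt hcont hne hs.bddAbove,
      ← hmono.map_csInf_of_continuousAt hcont hne hs.bddBelow, if_neg (by simp),
      EReal.toReal_coe, EReal.toReal_coe, Real.ediam_eq hs]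
  · rw [ediam_eq_top_iff_unbounded.2 hs, if_pos]
    rw [isBounded_iff_bddBelow_bddAbove, not_and_or] at hs
    exact hs.imp EReal.sInf_coe_image_of_not_bddBelow EReal.sSup_coe_image_of_not_bddAbove

theorem Real.ofReal_le_ediam_of_mem_of_add_mem {s : Set ℝ} {t c : ℝ} (hc : 0 ≤ c) (ht : t ∈ s)
    (htc : t + c ∈ s) : ENNReal.ofReal c ≤ ediam s := by
  simpa [edist_dist, Real.dist_eq, abs_of_nonneg hc] using edist_le_ediam_of_mem ht htc

namespace Set.OrdConnected

variable {s : Set ℝ}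

theorem exists_add_mem_of_ofReal_lt_ediam (hs : s.OrdConnected) {c : ℝ} (hc₀ : 0 ≤ c)
    (hc : ENNReal.ofReal c < ediam s) : ∃ t ∈ s, t + c ∈ s := by
  by_contra! hfree
  refine hc.not_ge (ediam_le fun x hx y hy => ?_)
  wlog hxy : x ≤ y generalizing x y
  · rw [edist_comm]; exact this y hy x hx (le_of_not_ge hxy)
  rw [edist_dist, Real.dist_eq, abs_sub_comm, abs_of_nonneg (sub_nonneg.2 hxy)]
  refine ENNReal.ofReal_le_ofReal (not_lt.1 fun hlt => hfree x hx ?_)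
  exact hs.out hx hy ⟨by linarith, by linarith⟩

theorem sInf_setOf_add_add_notMem_eq_ediam_div_two (hs : s.OrdConnected) :
    sInf {d : ℝ≥0∞ | ∃ δ : ℝ, 0 ≤ δ ∧ (∀ t ∈ s, t + δ + δ ∉ s) ∧ d = ENNReal.ofReal δ} =
      ediam s / 2 := by
  have ofReal_mul_two {δ : ℝ} (hδ : 0 ≤ δ) :
      ENNReal.ofReal δ * 2 = ENNReal.ofReal (δ + δ) := by
    rw [ENNReal.ofReal_add hδ hδ, mul_two]
  refine le_antisymm (le_of_forall_gt_imp_ge_of_dense fun a ha => ?_) (le_sInf ?_)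
  · rcases eq_or_ne a ⊤ with rfl | ha_top
    · exact le_top
    rw [ENNReal.div_lt_iff (by simp) (by simp), ← ENNReal.ofReal_toReal ha_top,
      ofReal_mul_two ENNReal.toReal_nonneg] at ha
    refine sInf_le ⟨a.toReal, ENNReal.toReal_nonneg, fun t ht htδ => ?_,
      (ENNReal.ofReal_toReal ha_top).symm⟩
    rw [add_assoc] at htδ
    exact ha.not_ge (Real.ofReal_le_ediam_of_mem_of_add_mem (by positivity) ht htδ)
  · rintro _ ⟨δ, hδ, hfree, rfl⟩
    refine ENNReal.div_le_of_le_mul (not_lt.1 fun hlt => ?_)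
    rw [ofReal_mul_two hδ] at hlt
    obtain ⟨t, ht, htδ⟩ := hs.exists_add_mem_of_ofReal_lt_ediam (by positivity) hlt
    exact hfree t ht (by rwa [add_assoc])

end Set.OrdConnected

theorem IsIntervalSet.ordConnected {J : Set ℝ} (hJ : IsIntervalSet J) : J.OrdConnected :=
  ⟨fun _ hr _ ht _ hs => hJ.2 hr ht hs.1 hs.2⟩

theorem intervalModule_map_apply {k : Type} [Field k] {T : Type} [Preorder T] {J : Set T}
    (hJ : IsIntervalSet J) {s t : T} (h : s ≤ t) (f : (intervalModule k T J hJ).space s)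
    (ht : PLift (t ∈ J)) :
    (intervalModule k T J hJ).map s t h f ht = if hs : s ∈ J then f ⟨hs⟩ else 0 :=
  rfl

instance zeroPers.subsingleton_space (k : Type) [Field k] (t : ℝ) :
    Subsingleton ((zeroPers k).space t) :=
  inferInstanceAs (Subsingleton PUnit)

theorem interleaved_intervalModule_zeroPers_iff {k : Type} [Field k] {J : Set ℝ}
    (hJ : IsIntervalSet J) {δ : ℝ} (hδ : 0 ≤ δ) :
    Interleaved k (intervalModule k ℝ J hJ) (zeroPers k) δ ↔
      ∀ t ∈ J, t + δ + δ ∉ J := by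
  constructor
  · rintro ⟨φ, ψ, -, -, hψφ, -⟩ t ht htδ
    have hzero : (ψ (t + δ)).comp (φ t) = 0 :=
      LinearMap.ext fun f => by
        rw [LinearMap.comp_apply, Subsingleton.elim (φ t f) 0, map_zero, LinearMap.zero_apply]
    let one : (intervalModule k ℝ J hJ).space t := fun _ => 1
    have h1 := congr_fun (LinearMap.congr_fun (hψφ t (by linarith)) one) ⟨htδ⟩
    rw [hzero, intervalModule_map_apply, dif_pos ht] at h1
    exact zero_ne_one h1
  · intro hfree
    refine ⟨fun _ => 0, fun _ => 0, fun _ _ _ => ?_, fun _ _ _ => ?_, fun t _ => ?_,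
      fun _ _ => ?_⟩
    · exact LinearMap.ext fun _ => Subsingleton.elim _ _
    · simp
    · refine LinearMap.ext fun f => funext fun htδ => ?_
      rw [intervalModule_map_apply, dif_neg fun ht => hfree t ht htδ.down]
      rfl
    · exact LinearMap.ext fun _ => Subsingleton.elim _ _

theorem dInter_intervalModule_zeroPers {k : Type} [Field k] {J : Set ℝ}
    (hJ : IsIntervalSet J) :
    dInter k (intervalModule k ℝ J hJ) (zeroPers k) = ediam J / 2 := by
  rw [← hJ.ordConnected.sInf_setOf_add_add_notMem_eq_ediam_div_two, dInter]
  exact congrArg sInf <| Set.ext fun _ => exists_congr fun _ => and_congr_right fun hδ =>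
    and_congr_left' (interleaved_intervalModule_zeroPers_iff hJ hδ)

theorem stmt13 {k : Type} [Field k] (J : Set ℝ) (hJ : IsIntervalSet J) :
    dInter k (intervalModule k ℝ J hJ) (zeroPers k) =
      if sInf (Real.toEReal '' J) = ⊥ ∨ sSup (Real.toEReal '' J) = ⊤ then ⊤
      else ENNReal.ofReal
        (((sSup (Real.toEReal '' J)).toReal - (sInf (Real.toEReal '' J)).toReal) / 2) := by
  rw [dInter_intervalModule_zeroPers, Real.ediam_eq_ite hJ.1]
  split_ifs
  · exact ENNReal.top_div_of_ne_top ENNReal.ofNat_ne_top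
  · rw [ENNReal.ofReal_div_of_pos two_pos, ENNReal.ofReal_ofNat]
end

section
/- Converse stability for decomposable modules: let U ≅ ⊕_{ℓ∈L} I^{J_ℓ} and V ≅ ⊕_{m∈M} I^{K_m} be persistence modules over ℝ that are direct sums of interval modules. Let dgm(U) be the multiset of points (inf J_ℓ, sup J_ℓ) ∈ H° (inf and sup in the extended reals) over those ℓ with inf J_ℓ < sup J_ℓ, and similarly dgm(V) from the K_m. Then d_i(U, V) ≤ d_b(dgm(U), dgm(V)). -/
attribute [local instance] Classical.propDecidable

open scoped ENNReal

/-! A `δ`-matching of the diagrams is turned, for every `δ' > δ`, into a `δ'`-interleaving of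
the direct sums, summand by summand. Intervals matched to each other have endpoints within `δ`,
so the identity maps `k → k` between their stalks, shifted by `δ'`, interleave the two interval
modules; the slack `δ' - δ` absorbs the difference between open and closed ends. An unmatched
interval has length at most `2δ < 2δ'`, so its structure maps over `2δ'` vanish and it can be
sent to zero. -/

noncomputable def leftEnd (J : Set ℝ) : EReal := sInf (Real.toEReal '' J)

noncomputable def rightEnd (J : Set ℝ) : EReal := sSup (Real.toEReal '' J)

section Endpoints

variable {J : Set ℝ}

lemma leftEnd_le {t : ℝ} (ht : t ∈ J) : leftEnd J ≤ t := sInf_le ⟨t, ht, rfl⟩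

lemma le_rightEnd {t : ℝ} (ht : t ∈ J) : (t : EReal) ≤ rightEnd J := le_sSup ⟨t, ht, rfl⟩

lemma exists_mem_lt_of_leftEnd_lt {t : ℝ} (ht : leftEnd J < t) : ∃ a ∈ J, a < t := by
  obtain ⟨_, ⟨a, ha, rfl⟩, hat⟩ := sInf_lt_iff.1 ht
  exact ⟨a, ha, EReal.coe_lt_coe_iff.1 hat⟩

lemma exists_mem_gt_of_lt_rightEnd {t : ℝ} (ht : t < rightEnd J) : ∃ b ∈ J, t < b := by
  obtain ⟨_, ⟨b, hb, rfl⟩, htb⟩ := lt_sSup_iff.1 ht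
  exact ⟨b, hb, EReal.coe_lt_coe_iff.1 htb⟩

lemma leftEnd_lt_rightEnd {s t : ℝ} (hs : s ∈ J) (ht : t ∈ J) (hst : s < t) :
    leftEnd J < rightEnd J :=
  (leftEnd_le hs).trans_lt ((EReal.coe_lt_coe_iff.2 hst).trans_le (le_rightEnd ht))

lemma IsIntervalSet.mem_of_mem_of_le_of_lt_rightEnd (hJ : IsIntervalSet J) {a t : ℝ}
    (ha : a ∈ J) (hat : a ≤ t) (ht : t < rightEnd J) : t ∈ J := by
  obtain ⟨b, hb, htb⟩ := exists_mem_gt_of_lt_rightEnd ht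
  exact hJ.2 ha hb hat htb.le

lemma IsIntervalSet.mem_of_leftEnd_lt_of_le_of_mem (hJ : IsIntervalSet J) {b t : ℝ}
    (ht : leftEnd J < t) (htb : t ≤ b) (hb : b ∈ J) : t ∈ J := by
  obtain ⟨a, ha, hat⟩ := exists_mem_lt_of_leftEnd_lt ht
  exact hJ.2 ha hb hat.le htb

lemma IsIntervalSet.mem_of_leftEnd_lt_of_lt_rightEnd (hJ : IsIntervalSet J) {t : ℝ}
    (h₁ : leftEnd J < t) (h₂ : t < rightEnd J) : t ∈ J := by
  obtain ⟨b, hb, htb⟩ := exists_mem_gt_of_lt_rightEnd h₂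
  exact hJ.mem_of_leftEnd_lt_of_le_of_mem h₁ htb.le hb

end Endpoints

lemma sub_le_of_diagDist_le {J : Set ℝ} {δ : ℝ} (hδ : 0 ≤ δ)
    (h : diagDist (leftEnd J, rightEnd J) ≤ ENNReal.ofReal δ) {s t : ℝ} (hs : s ∈ J)
    (ht : t ∈ J) : t - s ≤ 2 * δ := by
  unfold diagDist at h
  split_ifs at h with hinf
  · simp at h
  · push Not at hinf
    have hl := leftEnd_le hs
    have hr := le_rightEnd ht
    lift leftEnd J to ℝ using ⟨hl.trans_lt (EReal.coe_lt_top s) |>.ne, hinf.1⟩ with p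
    lift rightEnd J to ℝ using ⟨hinf.2, (EReal.bot_lt_coe t).trans_le hr |>.ne'⟩ with q
    rw [ENNReal.ofReal_le_ofReal_iff hδ, EReal.toReal_coe, EReal.toReal_coe] at h
    have : p ≤ s := EReal.coe_le_coe_iff.1 hl
    have : t ≤ q := EReal.coe_le_coe_iff.1 hr
    linarith

def EndpointsClose (J K : Set ℝ) (δ : ℝ) : Prop :=
  leftEnd K ≤ leftEnd J + δ ∧ leftEnd J ≤ leftEnd K + δ ∧
    rightEnd K ≤ rightEnd J + δ ∧ rightEnd J ≤ rightEnd K + δ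

namespace EndpointsClose

variable {J K : Set ℝ} {δ δ' : ℝ}

lemma symm (h : EndpointsClose J K δ) : EndpointsClose K J δ :=
  ⟨h.2.1, h.1, h.2.2.2, h.2.2.1⟩

lemma leftEnd_lt_add (h : EndpointsClose J K δ) (hδ : δ < δ') {t : ℝ} (ht : t ∈ J) :
    leftEnd K < ((t + δ' : ℝ) : EReal) :=
  calc leftEnd K ≤ leftEnd J + δ := h.1
    _ ≤ t + δ := by gcongr; exact leftEnd_le ht
    _ < ((t + δ' : ℝ) : EReal) := by rw [← EReal.coe_add]; exact_mod_cast (by linarith)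

lemma lt_rightEnd (h : EndpointsClose J K δ) (hδ : δ < δ') {t : ℝ} (ht : t + δ' ∈ J) :
    (t : EReal) < rightEnd K := by
  by_contra! hK
  have : ((t + δ' : ℝ) : EReal) ≤ ((t + δ : ℝ) : EReal) :=
    calc ((t + δ' : ℝ) : EReal) ≤ rightEnd J := le_rightEnd ht
      _ ≤ rightEnd K + δ := h.2.2.2
      _ ≤ t + δ := by gcongr
      _ = ((t + δ : ℝ) : EReal) := (EReal.coe_add t δ).symm
  exact absurd (EReal.coe_le_coe_iff.1 this) (by linarith)

end EndpointsClose

lemma le_add_of_eDiff_le {a b : EReal} {δ : ℝ} (hδ : 0 ≤ δ) (h : eDiff a b ≤ ENNReal.ofReal δ) :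
    a ≤ b + δ ∧ b ≤ a + δ := by
  unfold eDiff at h
  split_ifs at h with hab hinf
  · subst hab
    have : (0 : EReal) ≤ δ := by exact_mod_cast hδ
    exact ⟨le_add_of_nonneg_right this, le_add_of_nonneg_right this⟩
  · simp at h
  · push Not at hinf
    obtain ⟨ha₁, ha₂, hb₁, hb₂⟩ := hinf
    lift a to ℝ using ⟨ha₁, ha₂⟩
    lift b to ℝ using ⟨hb₁, hb₂⟩
    rw [ENNReal.ofReal_le_ofReal_iff hδ, EReal.toReal_coe, EReal.toReal_coe, abs_le] at h
    constructor <;> (rw [← EReal.coe_add]; exact_mod_cast (by linarith))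

lemma EndpointsClose.of_dPt_le {J K : Set ℝ} {δ : ℝ} (hδ : 0 ≤ δ)
    (h : dPt (leftEnd J, rightEnd J) (leftEnd K, rightEnd K) ≤ ENNReal.ofReal δ) :
    EndpointsClose J K δ := by
  obtain ⟨hl₁, hl₂⟩ := le_add_of_eDiff_le hδ (le_max_left _ _ |>.trans h)
  obtain ⟨hr₁, hr₂⟩ := le_add_of_eDiff_le hδ (le_max_right _ _ |>.trans h)
  exact ⟨hl₂, hl₁, hr₂, hr₁⟩

section IntervalModule

noncomputable def intervalHom (k : Type) [Field k] (J K : Set ℝ) (s t : ℝ) :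
    (PLift (s ∈ J) → k) →ₗ[k] (PLift (t ∈ K) → k) where
  toFun f _ := if hs : s ∈ J then f ⟨hs⟩ else 0
  map_add' f g := by funext; by_cases hs : s ∈ J <;> simp [hs]
  map_smul' c f := by funext; by_cases hs : s ∈ J <;> simp [hs]

variable {k : Type} [Field k]

lemma intervalHom_apply {J K : Set ℝ} {s t : ℝ} (f : PLift (s ∈ J) → k) (ht : PLift (t ∈ K)) :
    intervalHom k J K s t f ht = if hs : s ∈ J then f ⟨hs⟩ else 0 := rfl

lemma intervalHom_comp {I J K : Set ℝ} {r s t : ℝ} (h : r ∈ I → t ∈ K → s ∈ J) :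
    (intervalHom k J K s t).comp (intervalHom k I J r s) = intervalHom k I K r t := by
  refine LinearMap.ext fun f => funext fun ht => ?_
  by_cases hr : r ∈ I
  · simp [intervalHom_apply, hr, h hr ht.down]
  · by_cases hs : s ∈ J <;> simp [intervalHom_apply, hr, hs]

lemma intervalHom_eq_zero {J K : Set ℝ} {s t : ℝ} (h : s ∈ J → t ∉ K) :
    intervalHom k J K s t = 0 := by
  refine LinearMap.ext fun f => funext fun ht => ?_
  rw [intervalHom_apply, dif_neg fun hs => h hs ht.down]
  rfl

variable {J K : Set ℝ} {δ δ' : ℝ}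

lemma intervalHom_comp_map (hJ : IsIntervalSet J) (hK : IsIntervalSet K)
    (hJK : EndpointsClose J K δ) (hδ : δ < δ') {s t : ℝ} (hst : s ≤ t) :
    (intervalHom k J K t (t + δ')).comp (intervalHom k J J s t)
      = (intervalHom k K K (s + δ') (t + δ')).comp (intervalHom k J K s (s + δ')) := by
  rw [intervalHom_comp, intervalHom_comp]
  · intro hs ht
    exact hK.mem_of_leftEnd_lt_of_le_of_mem (hJK.leftEnd_lt_add hδ hs) (by linarith) ht
  · intro hs ht
    exact hJ.mem_of_mem_of_le_of_lt_rightEnd hs hst (hJK.symm.lt_rightEnd hδ ht)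

lemma intervalHom_comp_intervalHom (hK : IsIntervalSet K) (hJK : EndpointsClose J K δ)
    (hδ : δ < δ') (t : ℝ) :
    (intervalHom k K J (t + δ') (t + δ' + δ')).comp (intervalHom k J K t (t + δ'))
      = intervalHom k J J t (t + δ' + δ') :=
  intervalHom_comp fun ht ht' =>
    hK.mem_of_leftEnd_lt_of_lt_rightEnd (hJK.leftEnd_lt_add hδ ht) (hJK.lt_rightEnd hδ ht')

theorem interleaved_intervalModule (hJ : IsIntervalSet J) (hK : IsIntervalSet K)
    (hJK : EndpointsClose J K δ) (hδ : δ < δ') :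
    Interleaved k (intervalModule k ℝ J hJ) (intervalModule k ℝ K hK) δ' :=
  ⟨fun t => intervalHom k J K t (t + δ'), fun t => intervalHom k K J t (t + δ'),
    fun _ _ hst => intervalHom_comp_map hJ hK hJK hδ hst,
    fun _ _ hst => intervalHom_comp_map hK hJ hJK.symm hδ hst,
    fun t _ => intervalHom_comp_intervalHom hK hJK hδ t,
    fun t _ => intervalHom_comp_intervalHom hJ hJK.symm hδ t⟩

lemma intervalModule_map_eq_zero_of_diagDist_le (hJ : IsIntervalSet J) (hδ : 0 ≤ δ)
    (hδ' : δ < δ')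
    (hdiag : leftEnd J < rightEnd J → diagDist (leftEnd J, rightEnd J) ≤ ENNReal.ofReal δ)
    (t : ℝ) (h : t ≤ t + δ' + δ') :
    (intervalModule k ℝ J hJ).map t (t + δ' + δ') h = 0 :=
  intervalHom_eq_zero fun ht ht' => by
    have := sub_le_of_diagDist_le hδ (hdiag (leftEnd_lt_rightEnd ht ht' (by linarith))) ht ht'
    linarith

end IntervalModule

section DirectSum

variable {k : Type} [Field k] {T : Type} [Preorder T] {L M : Type}

noncomputable def dsumIncl (U : L → PersMod k T) (ℓ : L) (t : T) :
    (U ℓ).space t →ₗ[k] (dsum U).space t :=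
  DFinsupp.lsingle (R := k) (M := fun ℓ => (U ℓ).space t) ℓ

lemma dsum_hom_ext {U : L → PersMod k T} {N : Type} [AddCommGroup N] [Module k N] {t : T}
    {f g : (dsum U).space t →ₗ[k] N} (h : ∀ ℓ, f ∘ₗ dsumIncl U ℓ t = g ∘ₗ dsumIncl U ℓ t) :
    f = g :=
  DFinsupp.lhom_ext' (M := fun ℓ => (U ℓ).space t) h

lemma dsum_map_comp_dsumIncl (U : L → PersMod k T) (ℓ : L) {s t : T} (h : s ≤ t) :
    (dsum U).map s t h ∘ₗ dsumIncl U ℓ s = dsumIncl U ℓ t ∘ₗ (U ℓ).map s t h :=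
  LinearMap.ext fun _ => DFinsupp.mapRange_single (β₁ := fun ℓ => (U ℓ).space s)
    (β₂ := fun ℓ => (U ℓ).space t) (hf := fun _ => map_zero _)

end DirectSum

section Matching

lemma Relator.BiUnique.flip {α β : Type*} {R : α → β → Prop} (h : Relator.BiUnique R) :
    Relator.BiUnique (flip R) :=
  ⟨fun _ _ _ h₁ h₂ => h.2 h₁ h₂, h.1.flip⟩

variable {k : Type} [Field k] {L M : Type} {U : L → PersMod k ℝ} {V : M → PersMod k ℝ}

noncomputable def matchingComponent (R : L → M → Prop) {δ : ℝ}
    (φ : ∀ ℓ m, R ℓ m → ∀ t, (U ℓ).space t →ₗ[k] (V m).space (t + δ)) (t : ℝ) (ℓ : L) :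
    (U ℓ).space t →ₗ[k] (dsum V).space (t + δ) :=
  if h : ∃ m, R ℓ m then dsumIncl V h.choose (t + δ) ∘ₗ φ ℓ h.choose h.choose_spec t else 0

noncomputable def matchingHom (R : L → M → Prop) {δ : ℝ}
    (φ : ∀ ℓ m, R ℓ m → ∀ t, (U ℓ).space t →ₗ[k] (V m).space (t + δ)) (t : ℝ) :
    (dsum U).space t →ₗ[k] (dsum V).space (t + δ) :=
  DFinsupp.lsum ℕ (matchingComponent R φ t)

variable {R : L → M → Prop} {δ : ℝ}
  {φ : ∀ ℓ m, R ℓ m → ∀ t, (U ℓ).space t →ₗ[k] (V m).space (t + δ)}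

lemma matchingHom_comp_dsumIncl_eq_component (t : ℝ) (ℓ : L) :
    matchingHom R φ t ∘ₗ dsumIncl U ℓ t = matchingComponent R φ t ℓ :=
  LinearMap.ext fun x => DFinsupp.lsum_single ℕ (matchingComponent R φ t) ℓ x

lemma matchingHom_comp_dsumIncl (hR : Relator.RightUnique R) {ℓ : L} {m : M} (h : R ℓ m)
    (t : ℝ) :
    matchingHom R φ t ∘ₗ dsumIncl U ℓ t = dsumIncl V m (t + δ) ∘ₗ φ ℓ m h t := by
  have hm : ∃ m, R ℓ m := ⟨m, h⟩
  obtain rfl : hm.choose = m := hR hm.choose_spec h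
  rw [matchingHom_comp_dsumIncl_eq_component, matchingComponent, dif_pos hm]

lemma matchingHom_comp_dsumIncl_of_forall_not {ℓ : L} (h : ∀ m, ¬ R ℓ m) (t : ℝ) :
    matchingHom R φ t ∘ₗ dsumIncl U ℓ t = 0 := by
  rw [matchingHom_comp_dsumIncl_eq_component, matchingComponent, dif_neg (not_exists.2 h)]

lemma matchingHom_comp_map (hR : Relator.RightUnique R)
    (hφ : ∀ ℓ m (hℓm : R ℓ m) s t (h : s ≤ t),
      φ ℓ m hℓm t ∘ₗ (U ℓ).map s t h
        = (V m).map (s + δ) (t + δ) (by linarith) ∘ₗ φ ℓ m hℓm s)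
    (s t : ℝ) (h : s ≤ t) :
    matchingHom R φ t ∘ₗ (dsum U).map s t h
      = (dsum V).map (s + δ) (t + δ) (by linarith) ∘ₗ matchingHom R φ s := by
  refine dsum_hom_ext fun ℓ => ?_
  rw [LinearMap.comp_assoc, dsum_map_comp_dsumIncl, ← LinearMap.comp_assoc,
    LinearMap.comp_assoc _ (matchingHom R φ s)]
  by_cases hℓ : ∃ m, R ℓ m
  · obtain ⟨m, hℓm⟩ := hℓ
    rw [matchingHom_comp_dsumIncl hR hℓm, matchingHom_comp_dsumIncl hR hℓm, LinearMap.comp_assoc,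
      hφ ℓ m hℓm s t h, ← LinearMap.comp_assoc, ← LinearMap.comp_assoc, dsum_map_comp_dsumIncl]
  · rw [not_exists] at hℓ
    rw [matchingHom_comp_dsumIncl_of_forall_not hℓ, matchingHom_comp_dsumIncl_of_forall_not hℓ,
      LinearMap.zero_comp, LinearMap.comp_zero]

lemma matchingHom_comp_matchingHom (hR : Relator.BiUnique R)
    {ψ : ∀ m ℓ, flip R m ℓ → ∀ t, (V m).space t →ₗ[k] (U ℓ).space (t + δ)}
    (hψφ : ∀ ℓ m (hℓm : R ℓ m) t (h : t ≤ t + δ + δ),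
      ψ m ℓ hℓm (t + δ) ∘ₗ φ ℓ m hℓm t = (U ℓ).map t (t + δ + δ) h)
    (hU : ∀ ℓ, (∀ m, ¬ R ℓ m) → ∀ t (h : t ≤ t + δ + δ), (U ℓ).map t (t + δ + δ) h = 0)
    (t : ℝ) (h : t ≤ t + δ + δ) :
    matchingHom (flip R) ψ (t + δ) ∘ₗ matchingHom R φ t = (dsum U).map t (t + δ + δ) h := by
  refine dsum_hom_ext fun ℓ => ?_
  rw [LinearMap.comp_assoc, dsum_map_comp_dsumIncl]
  by_cases hℓ : ∃ m, R ℓ m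
  · obtain ⟨m, hℓm⟩ := hℓ
    rw [matchingHom_comp_dsumIncl hR.2 hℓm, ← LinearMap.comp_assoc,
      matchingHom_comp_dsumIncl hR.flip.2 hℓm, LinearMap.comp_assoc, hψφ ℓ m hℓm t h]
  · rw [not_exists] at hℓ
    rw [matchingHom_comp_dsumIncl_of_forall_not hℓ, LinearMap.comp_zero, hU ℓ hℓ t h,
      LinearMap.comp_zero]

theorem interleaved_dsum (hR : Relator.BiUnique R)
    (hRV : ∀ ℓ m, R ℓ m → Interleaved k (U ℓ) (V m) δ)
    (hU : ∀ ℓ, (∀ m, ¬ R ℓ m) → ∀ t (h : t ≤ t + δ + δ), (U ℓ).map t (t + δ + δ) h = 0)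
    (hV : ∀ m, (∀ ℓ, ¬ R ℓ m) → ∀ t (h : t ≤ t + δ + δ), (V m).map t (t + δ + δ) h = 0) :
    Interleaved k (dsum U) (dsum V) δ := by
  choose φ ψ hφ hψ hψφ hφψ using hRV
  exact ⟨matchingHom R φ, matchingHom (flip R) fun m ℓ hℓm => ψ ℓ m hℓm,
    matchingHom_comp_map hR.2 hφ,
    matchingHom_comp_map hR.flip.2 fun m ℓ hℓm => hψ ℓ m hℓm,
    matchingHom_comp_matchingHom hR hψφ hU,
    matchingHom_comp_matchingHom hR.flip (fun m ℓ hℓm => hφψ ℓ m hℓm) hV⟩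

end Matching

namespace Interleaved

variable {k : Type} [Field k] {U U' V : PersMod k ℝ} {δ : ℝ}

lemma symm (h : Interleaved k U V δ) : Interleaved k V U δ :=
  let ⟨φ, ψ, hφ, hψ, hψφ, hφψ⟩ := h
  ⟨ψ, φ, hψ, hφ, hφψ, hψφ⟩

lemma of_persIso_left (hU : PersIso U U') (h : Interleaved k U' V δ) :
    Interleaved k U V δ := by
  obtain ⟨e, he⟩ := hU
  obtain ⟨φ, ψ, hφ, hψ, hψφ, hφψ⟩ := h
  have he_symm : ∀ s t (h : s ≤ t),
      (e t).symm.toLinearMap ∘ₗ U'.map s t h = U.map s t h ∘ₗ (e s).symm.toLinearMap := by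
    intro s t h
    refine LinearMap.ext fun x => (e t).symm_apply_eq.2 ?_
    simpa using (LinearMap.congr_fun (he s t h) ((e s).symm x)).symm
  refine ⟨fun t => φ t ∘ₗ (e t).toLinearMap, fun t => (e (t + δ)).symm.toLinearMap ∘ₗ ψ t,
    fun s t h => ?_, fun s t h => ?_, fun t h => ?_, fun t h => ?_⟩
  · rw [LinearMap.comp_assoc, he, ← LinearMap.comp_assoc, hφ, LinearMap.comp_assoc]
  · rw [LinearMap.comp_assoc, hψ, ← LinearMap.comp_assoc, he_symm, LinearMap.comp_assoc]
  · dsimp only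
    rw [LinearMap.comp_assoc, ← LinearMap.comp_assoc (e t).toLinearMap, hψφ,
      ← LinearMap.comp_assoc, he_symm, LinearMap.comp_assoc, LinearEquiv.symm_comp,
      LinearMap.comp_id]
  · dsimp only
    rw [LinearMap.comp_assoc, ← LinearMap.comp_assoc (ψ t),
      LinearEquiv.comp_symm, LinearMap.id_comp, hφψ]

lemma of_persIso (hU : PersIso U U') {V' : PersMod k ℝ} (hV : PersIso V V')
    (h : Interleaved k U' V' δ) : Interleaved k U V δ :=
  (h.symm.of_persIso_left hV).symm.of_persIso_left hU

end Interleaved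

section Diagram

variable {L M : Type}

/-- The points `(inf J ℓ, sup J ℓ)` of the persistence diagram of `⊕ I^{J ℓ}`. -/
noncomputable def intervalDgm (J : L → Set ℝ) :
    {ℓ : L // leftEnd (J ℓ) < rightEnd (J ℓ)} → EReal × EReal :=
  fun ℓ => (leftEnd (J ℓ.1), rightEnd (J ℓ.1))

def matchingRel {P : L → Prop} {Q : M → Prop} (Ms : Set (Subtype P × Subtype Q))
    (ℓ : L) (m : M) : Prop :=
  ∃ hℓ hm, (⟨ℓ, hℓ⟩, ⟨m, hm⟩) ∈ Ms

lemma IsMatching.biUnique_matchingRel {P : L → Prop} {Q : M → Prop}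
    {Ms : Set (Subtype P × Subtype Q)} (h : IsMatching Ms) :
    Relator.BiUnique (matchingRel Ms) :=
  ⟨fun _ _ _ ⟨_, _, h₁⟩ ⟨_, _, h₂⟩ => congrArg Subtype.val (h.2 _ _ _ h₁ h₂),
    fun _ _ _ ⟨_, _, h₁⟩ ⟨_, _, h₂⟩ => congrArg Subtype.val (h.1 _ _ _ h₁ h₂)⟩

theorem interleaved_of_isDeltaMatching {k : Type} [Field k] {J : L → Set ℝ} {K : M → Set ℝ}
    (hJ : ∀ ℓ, IsIntervalSet (J ℓ)) (hK : ∀ m, IsIntervalSet (K m)) {δ δ' : ℝ} (hδ : 0 ≤ δ)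
    (hδ' : δ < δ') (hM : IsDeltaMatching (intervalDgm J) (intervalDgm K) (ENNReal.ofReal δ)) :
    Interleaved k (dsum fun ℓ => intervalModule k ℝ (J ℓ) (hJ ℓ))
      (dsum fun m => intervalModule k ℝ (K m) (hK m)) δ' := by
  obtain ⟨Ms, hMs, hclose, hJ_diag, hK_diag⟩ := hM
  refine interleaved_dsum hMs.biUnique_matchingRel ?_ ?_ ?_
  · rintro ℓ m ⟨_, _, hℓm⟩
    exact interleaved_intervalModule _ _ (EndpointsClose.of_dPt_le hδ (hclose _ hℓm)) hδ'
  · intro ℓ hℓ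
    exact intervalModule_map_eq_zero_of_diagDist_le _ hδ hδ' fun hlt =>
      hJ_diag ⟨ℓ, hlt⟩ fun m hℓm => hℓ m ⟨hlt, m.2, hℓm⟩
  · intro m hm
    exact intervalModule_map_eq_zero_of_diagDist_le _ hδ hδ' fun hlt =>
      hK_diag ⟨m, hlt⟩ fun ℓ hℓm => hm ℓ ⟨ℓ.2, hlt, hℓm⟩

end Diagram

lemma dInter_le_ofReal {k : Type} [Field k] {U V : PersMod k ℝ} {δ : ℝ} (hδ : 0 ≤ δ)
    (h : Interleaved k U V δ) : dInter k U V ≤ ENNReal.ofReal δ :=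
  sInf_le ⟨δ, hδ, h, rfl⟩

theorem stmt14 {k : Type} [Field k] {L M : Type} (J : L → Set ℝ) (K : M → Set ℝ)
    (hJ : ∀ ℓ, IsIntervalSet (J ℓ)) (hK : ∀ m, IsIntervalSet (K m))
    (U V : PersMod k ℝ)
    (hU : PersIso U (dsum fun ℓ => intervalModule k ℝ (J ℓ) (hJ ℓ)))
    (hV : PersIso V (dsum fun m => intervalModule k ℝ (K m) (hK m))) :
    dInter k U V ≤
      dBottle
        (fun ℓ : {ℓ : L // sInf (Real.toEReal '' J ℓ) < sSup (Real.toEReal '' J ℓ)} =>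
          (sInf (Real.toEReal '' J ℓ.1), sSup (Real.toEReal '' J ℓ.1)))
        (fun m : {m : M // sInf (Real.toEReal '' K m) < sSup (Real.toEReal '' K m)} =>
          (sInf (Real.toEReal '' K m.1), sSup (Real.toEReal '' K m.1))) := by
  refine le_sInf ?_
  rintro _ ⟨δ, hδ, hM, rfl⟩
  refine ENNReal.le_of_forall_pos_le_add fun ε hε _ => ?_
  have hδε : δ < δ + ε := lt_add_of_pos_right δ hε
  calc dInter k U V ≤ ENNReal.ofReal (δ + ε) :=
        dInter_le_ofReal (by positivity)
          ((interleaved_of_isDeltaMatching hJ hK hδ hδε hM).of_persIso hU hV)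
    _ = ENNReal.ofReal δ + ε := by
      rw [ENNReal.ofReal_add hδ ε.coe_nonneg, ENNReal.ofReal_coe_nnreal]
end
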